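/- arXiv:1308.3643 — 11 statements merged into one kernel-verified Lean document; each statement's English description precedes it below -/
import Mathlib

section
/- Let G : ℝ^d → (convex compact subsets of ℝ^d) be l-Lipschitz with respect to the Hausdorff distance induced by the sup-norm, with l < 1. Then for any points x⁰, ŷ ∈ ℝ^d there exists x̂ ∈ ℝ^d such that ŷ ∈ x̂ + G(x̂) and ‖x⁰ − x̂‖∞ ≤ dist∞(ŷ, x⁰ + G(x⁰)) / (1 − l). -/
open Metric Set Pointwise

theorem stmt0 {d : ℕ} (G : (Fin d → ℝ) → Set (Fin d → ℝ))
    (hne : ∀ x, (G x).Nonempty) (hcv : ∀ x, Convex ℝ (G x))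
    (hcp : ∀ x, IsCompact (G x))
    (l : ℝ) (hl : l < 1)
    (hlip : ∀ x y, hausdorffDist (G x) (G y) ≤ l * dist x y)
    (x0 yhat : Fin d → ℝ) :
    ∃ xhat : Fin d → ℝ, yhat ∈ {xhat} + G xhat ∧
      dist x0 xhat ≤ infDist yhat ({x0} + G x0) / (1 - l) := by
  classical
  have hfin : ∀ a b : Fin d → ℝ, EMetric.hausdorffEdist (G a) (G b) ≠ ⊤ := fun a b =>
    hausdorffEdist_ne_top_of_nonempty_of_bounded (hne a) (hne b)
      (hcp a).isBounded (hcp b).isBounded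
  have hmem : ∀ (a : Fin d → ℝ), yhat - a ∈ G a → yhat ∈ {a} + G a := by
    intro a ha
    have : a + (yhat - a) ∈ {a} + G a := Set.add_mem_add (mem_singleton a) ha
    simpa [add_sub_cancel] using this
  have htr : infDist yhat ({x0} + G x0) = infDist (yhat - x0) (G x0) := by
    rw [Set.singleton_add]
    have h := infDist_image (Φ := fun b => x0 + b) (x := yhat - x0) (t := G x0)
      (isometry_add_left x0)
    simpa [add_sub_cancel] using h
  have hl1 : 0 < 1 - l := by linarith
  rw [htr]
  rcases lt_or_ge l 0 with hneg | hl0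
  · -- degenerate case: l < 0
    obtain ⟨g, hg, hgd⟩ := (hcp x0).exists_infDist_eq_dist (hne x0) (yhat - x0)
    by_cases h0 : infDist (yhat - x0) (G x0) = 0
    · refine ⟨x0, hmem x0 ?_, ?_⟩
      · exact ((hcp x0).isClosed.mem_iff_infDist_zero (hne x0)).2 h0
      · simpa using div_nonneg infDist_nonneg hl1.le
    · exfalso
      have hpos : 0 < infDist (yhat - x0) (G x0) :=
        lt_of_le_of_ne infDist_nonneg (Ne.symm h0)
      have hdd : dist x0 (yhat - g) = infDist (yhat - x0) (G x0) := by
        have h1 : x0 - (yhat - g) = -((yhat - x0) - g) := by abel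
        rw [dist_eq_norm, h1, norm_neg, ← dist_eq_norm, hgd]
      have := hlip x0 (yhat - g)
      have hH : (0:ℝ) ≤ hausdorffDist (G x0) (G (yhat - g)) := hausdorffDist_nonneg
      nlinarith [this, hdd, hpos, hneg, hH]
  · -- main case: 0 ≤ l < 1
    set F : (Fin d → ℝ) → (Fin d → ℝ) := fun x =>
      yhat - Classical.choose ((hcp x).exists_infDist_eq_dist (hne x) (yhat - x)) with hF
    have hFspec : ∀ x : Fin d → ℝ, yhat - F x ∈ G x ∧
        dist x (F x) = infDist (yhat - x) (G x) := by
      intro x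
      obtain ⟨hg, hd⟩ :=
        Classical.choose_spec ((hcp x).exists_infDist_eq_dist (hne x) (yhat - x))
      constructor
      · simpa [hF, sub_sub_cancel] using hg
      · have : dist x (F x) = dist (yhat - x) (yhat - F x) := (dist_sub_left yhat x (F x)).symm
        rw [this]
        simpa [hF, sub_sub_cancel] using hd.symm
    set X : ℕ → (Fin d → ℝ) := fun n => F^[n] x0 with hX
    set r : ℕ → ℝ := fun n => infDist (yhat - X n) (G (X n)) with hr
    have hXsucc : ∀ n, X (n + 1) = F (X n) := fun n => Function.iterate_succ_apply' F n x0
    have hdist : ∀ n, dist (X n) (X (n + 1)) = r n := by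
      intro n; rw [hXsucc n]; exact (hFspec (X n)).2
    have hrec : ∀ n, r (n + 1) ≤ l * r n := by
      intro n
      have h1 : yhat - X (n + 1) ∈ G (X n) := by rw [hXsucc n]; exact (hFspec (X n)).1
      calc r (n + 1) ≤ hausdorffDist (G (X n)) (G (X (n + 1))) :=
            infDist_le_hausdorffDist_of_mem h1 (hfin _ _)
        _ ≤ l * dist (X n) (X (n + 1)) := hlip _ _
        _ = l * r n := by rw [hdist n]
    have hgeo : ∀ n, r n ≤ r 0 * l ^ n := by
      intro n
      induction n with
      | zero => simp
      | succ n ih =>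
        calc r (n + 1) ≤ l * r n := hrec n
          _ ≤ l * (r 0 * l ^ n) := mul_le_mul_of_nonneg_left ih hl0
          _ = r 0 * l ^ (n + 1) := by ring
    have hu : ∀ n, dist (X n) (X (n + 1)) ≤ r 0 * l ^ n := by
      intro n; rw [hdist n]; exact hgeo n
    have hcauchy : CauchySeq X := cauchySeq_of_le_geometric l (r 0) hl hu
    obtain ⟨xhat, hx⟩ := cauchySeq_tendsto_of_complete hcauchy
    have hd0 : Filter.Tendsto (fun n => dist (X n) xhat) Filter.atTop (nhds 0) :=
      tendsto_iff_dist_tendsto_zero.1 hx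
    have hr0 : Filter.Tendsto r Filter.atTop (nhds 0) := by
      apply squeeze_zero (fun n => infDist_nonneg) hgeo
      have := (tendsto_pow_atTop_nhds_zero_of_lt_one hl0 hl).const_mul (r 0)
      simpa using this
    have hcle : ∀ n, infDist (yhat - xhat) (G xhat) ≤
        r n + (l * dist (X n) xhat + dist (X n) xhat) := by
      intro n
      have h1 : infDist (yhat - xhat) (G xhat) ≤
          infDist (yhat - X n) (G xhat) + dist (yhat - xhat) (yhat - X n) :=
        infDist_le_infDist_add_dist
      have h2 : infDist (yhat - X n) (G xhat) ≤
          infDist (yhat - X n) (G (X n)) + hausdorffDist (G (X n)) (G xhat) :=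
        infDist_le_infDist_add_hausdorffDist (hfin _ _)
      have h3 : dist (yhat - xhat) (yhat - X n) = dist (X n) xhat := by
        rw [dist_sub_left, dist_comm]
      have h4 := hlip (X n) xhat
      rw [h3] at h1
      simp only [hr]
      linarith
    have hT : Filter.Tendsto (fun n => r n + (l * dist (X n) xhat + dist (X n) xhat))
        Filter.atTop (nhds 0) := by
      have := hr0.add ((hd0.const_mul l).add hd0)
      simpa using this
    have hc0 : infDist (yhat - xhat) (G xhat) ≤ 0 := ge_of_tendsto' hT hcle
    have hmem' : yhat - xhat ∈ G xhat :=
      ((hcp xhat).isClosed.mem_iff_infDist_zero (hne xhat)).2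
        (le_antisymm hc0 infDist_nonneg)
    refine ⟨xhat, hmem xhat hmem', ?_⟩
    have hb : dist (X 0) xhat ≤ r 0 / (1 - l) :=
      dist_le_of_le_geometric_of_tendsto₀ l (r 0) hl hu hx
    simpa [hX, hr] using hb
end

section
/- Let G : ℝ^d → (convex compact subsets of ℝ^d) be l-Lipschitz w.r.t. the sup-norm Hausdorff distance with l < 1, and let x⁰, ŷ ∈ ℝ^d with ŷ ∉ x⁰ + G(x⁰). Then there exists x̂ ∈ ℝ^d with ŷ ∈ x̂ + ∂G(x̂) (the topological boundary of G(x̂)) and ‖x⁰ − x̂‖∞ ≤ dist∞(ŷ, x⁰ + G(x⁰)) / (1 − l). -/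
/-!
Write `D(x) = dist(ŷ - x, G x)`, so that `D(x) = 0` iff `ŷ ∈ x + G x`. Moving from `x` to `ŷ - g`,
with `g ∈ G x` nearest to `ŷ - x`, is a step of length `D(x)` after which `D` is at most `l D(x)`;
the iterates therefore converge geometrically to a zero of `D` at distance at most
`D(x⁰) / (1 - l)` from `x⁰`. Take `x̂` nearest to `x⁰` in the closed set `S = {D = 0}`; as
`x⁰ ∉ S`, `x̂` is not interior to `S`. If `ŷ - x̂` were interior to `G x̂`, say with a ball of
radius `ε`, then each `G x`, being convex and within Hausdorff distance `l ‖x - x̂‖` of `G x̂`,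
would contain the ball of radius `ε - l ‖x - x̂‖` with the same centre, making `x̂` interior
to `S`.
-/

open Metric Set Pointwise Filter Topology

theorem exists_eq_zero_of_geometric_descent {X : Type*} [MetricSpace X] [CompleteSpace X]
    {F : X → ℝ} (hF : Continuous F) {l : ℝ} (hl₀ : 0 ≤ l) (hl : l < 1)
    (hstep : ∀ x, ∃ x', dist x x' ≤ F x ∧ F x' ≤ l * F x) (x₀ : X) :
    ∃ x, F x = 0 ∧ dist x₀ x ≤ F x₀ / (1 - l) := by
  choose next hdist hdecay using hstep
  set u : ℕ → X := fun n => next^[n] x₀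
  have hu_succ (n : ℕ) : u (n + 1) = next (u n) := Function.iterate_succ_apply' next n x₀
  have hF_le (n : ℕ) : F (u n) ≤ F x₀ * l ^ n := by
    induction n with
    | zero => simp [u]
    | succ n ih =>
      calc F (u (n + 1)) ≤ l * F (u n) := hu_succ n ▸ hdecay _
        _ ≤ l * (F x₀ * l ^ n) := mul_le_mul_of_nonneg_left ih hl₀
        _ = F x₀ * l ^ (n + 1) := by ring
  have hu_dist (n : ℕ) : dist (u n) (u (n + 1)) ≤ F x₀ * l ^ n :=
    (hu_succ n ▸ hdist (u n)).trans (hF_le n)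
  obtain ⟨x, hx⟩ := cauchySeq_tendsto_of_complete (cauchySeq_of_le_geometric l _ hl hu_dist)
  refine ⟨x, ?_, dist_le_of_le_geometric_of_tendsto₀ l _ hl hu_dist hx⟩
  have hFu : Tendsto (fun n => F (u n)) atTop (𝓝 0) := by
    refine squeeze_zero (fun n => dist_nonneg.trans (hdist (u n))) hF_le ?_
    simpa using (tendsto_pow_atTop_nhds_zero_of_lt_one hl₀ hl).const_mul (F x₀)
  exact tendsto_nhds_unique ((hF.tendsto x).comp hx) hFu

section Normed

variable {E : Type*} [NormedAddCommGroup E] [NormedSpace ℝ E]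

theorem Convex.mul_infDist_le_infDist_add_smul_sub {C : Set E} (hC : Convex ℝ C) {b : E}
    (hb : b ∈ C) (p : E) {c : ℝ} (hc : 0 ≤ c) :
    (1 + c) * infDist p C ≤ infDist (p + c • (p - b)) C := by
  have hc₁ : 0 < 1 + c := by linarith
  refine (le_infDist ⟨b, hb⟩).2 fun b' hb' => ?_
  have hq : (1 + c)⁻¹ • b' + (c / (1 + c)) • b ∈ C :=
    hC hb' hb (by positivity) (by positivity) (by field_simp)
  have hpq :
      (1 + c) • (p - ((1 + c)⁻¹ • b' + (c / (1 + c)) • b)) = p + c • (p - b) - b' := by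
    match_scalars <;> field_simp
  calc (1 + c) * infDist p C ≤ (1 + c) * dist p ((1 + c)⁻¹ • b' + (c / (1 + c)) • b) :=
        mul_le_mul_of_nonneg_left (infDist_le_dist_of_mem hq) hc₁.le
    _ = dist (p + c • (p - b)) b' := by
        rw [dist_eq_norm, dist_eq_norm, ← hpq, norm_smul, Real.norm_of_nonneg hc₁.le]

theorem IsCompact.ball_subset_of_hausdorffDist_le {C D : Set E} (hCc : IsCompact C)
    (hCv : Convex ℝ C) (hCn : C.Nonempty) {y : E} {ε η : ℝ} (hD : ball y ε ⊆ D)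
    (hfin : hausdorffEDist D C ≠ ⊤) (hη : hausdorffDist D C ≤ η) :
    ball y (ε - η) ⊆ C := by
  intro p hp
  by_contra hpC
  have hρ : 0 < infDist p C := (hCc.isClosed.notMem_iff_infDist_pos hCn).1 hpC
  obtain ⟨b, hb, hpb⟩ := hCc.exists_infDist_eq_dist hCn p
  have hη₀ : 0 ≤ η := hausdorffDist_nonneg.trans hη
  set a := p + (η / infDist p C) • (p - b)
  have haD : a ∈ D := hD <| by
    have : dist a p = η := by
      rw [dist_eq_norm, add_sub_cancel_left, norm_smul, ← dist_eq_norm, ← hpb,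
        Real.norm_of_nonneg (by positivity), div_mul_cancel₀ _ hρ.ne']
    rw [mem_ball] at hp ⊢
    linarith [dist_triangle a p y]
  have hfar := hCv.mul_infDist_le_infDist_add_smul_sub hb p (c := η / infDist p C) (by positivity)
  have hnear : infDist a C ≤ η := by
    simpa [infDist_zero_of_mem haD] using (infDist_le_infDist_add_hausdorffDist hfin).trans
      (add_le_add_right hη (infDist a D))
  nlinarith [mul_div_cancel₀ η hρ.ne']

end Normed

theorem eq_of_mem_interior_of_forall_dist_le {E : Type*} [NormedAddCommGroup E]
    [NormedSpace ℝ E] {S : Set E} {x₀ x : E} (hx : x ∈ interior S)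
    (hmin : ∀ z ∈ S, dist x₀ x ≤ dist x₀ z) : x₀ = x := by
  by_contra hne
  have hseg : ∀ᶠ t in 𝓝[>] (0 : ℝ), AffineMap.lineMap x x₀ t ∈ S ∧ t < 1 := by
    refine (Filter.Eventually.and ?_ (eventually_lt_nhds one_pos)).filter_mono nhdsWithin_le_nhds
    have := (AffineMap.lineMap_continuous (p := x) (q := x₀)).tendsto (0 : ℝ)
    rw [AffineMap.lineMap_apply_zero] at this
    exact this (mem_interior_iff_mem_nhds.1 hx)
  obtain ⟨t, ⟨htS, ht₁⟩, ht₀ : 0 < t⟩ := (hseg.and self_mem_nhdsWithin).exists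
  have := hmin _ htS
  rw [dist_comm x₀ (AffineMap.lineMap x x₀ t), dist_lineMap_right,
    Real.norm_of_nonneg (by linarith), dist_comm x₀ x] at this
  nlinarith [dist_pos.2 (Ne.symm hne)]

section InclusionDefect

variable {E : Type*} [NormedAddCommGroup E] {G : E → Set E} {l : ℝ}

noncomputable def inclusionDefect (G : E → Set E) (y x : E) : ℝ := infDist (y - x) (G x)

theorem inclusionDefect_eq_infDist_singleton_add (G : E → Set E) (y x : E) :
    inclusionDefect G y x = infDist y ({x} + G x) := by
  have := infDist_image (x := y - x) (t := G x) (IsometryEquiv.addLeft x).isometry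
  simpa [inclusionDefect, singleton_add] using this.symm

theorem inclusionDefect_eq_zero_iff {x : E} (hcl : IsClosed (G x)) (hne : (G x).Nonempty)
    (y : E) :
    inclusionDefect G y x = 0 ↔ y - x ∈ G x :=
  (hcl.mem_iff_infDist_zero hne).symm

theorem inclusionDefect_le_add (hfin : ∀ x z, hausdorffEDist (G x) (G z) ≠ ⊤)
    (hlip : ∀ x z, hausdorffDist (G x) (G z) ≤ l * dist x z) (y x z : E) :
    inclusionDefect G y x ≤ inclusionDefect G y z + (1 + l) * dist x z := by
  unfold inclusionDefect
  calc infDist (y - x) (G x) ≤ infDist (y - x) (G z) + hausdorffDist (G z) (G x) :=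
        infDist_le_infDist_add_hausdorffDist (hfin z x)
    _ ≤ infDist (y - z) (G z) + dist (y - x) (y - z) + l * dist z x :=
        add_le_add infDist_le_infDist_add_dist (hlip z x)
    _ = infDist (y - z) (G z) + (1 + l) * dist x z := by
        rw [dist_sub_left, dist_comm z x]; ring

theorem continuous_inclusionDefect (hfin : ∀ x z, hausdorffEDist (G x) (G z) ≠ ⊤)
    (hlip : ∀ x z, hausdorffDist (G x) (G z) ≤ l * dist x z) (y : E) :
    Continuous (inclusionDefect G y) :=
  (LipschitzWith.of_le_add_mul' _ (inclusionDefect_le_add hfin hlip y)).continuous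

/-- The step `x ↦ y - g`, with `g ∈ G x` nearest to `y - x`. -/
theorem exists_dist_le_inclusionDefect_le_mul (hcp : ∀ x, IsCompact (G x))
    (hne : ∀ x, (G x).Nonempty) (hfin : ∀ x z, hausdorffEDist (G x) (G z) ≠ ⊤)
    (hlip : ∀ x z, hausdorffDist (G x) (G z) ≤ l * dist x z) (y x : E) :
    ∃ x', dist x x' ≤ inclusionDefect G y x ∧
      inclusionDefect G y x' ≤ l * inclusionDefect G y x := by
  obtain ⟨g, hg, hgd⟩ := (hcp x).exists_infDist_eq_dist (hne x) (y - x)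
  have hdist : dist x (y - g) = inclusionDefect G y x := by
    rw [inclusionDefect, hgd, dist_eq_norm, dist_eq_norm, ← norm_neg]
    congr 1; abel
  refine ⟨y - g, hdist.le, ?_⟩
  calc inclusionDefect G y (y - g) = infDist g (G (y - g)) := by simp [inclusionDefect]
    _ ≤ infDist g (G x) + hausdorffDist (G x) (G (y - g)) :=
        infDist_le_infDist_add_hausdorffDist (hfin x _)
    _ ≤ 0 + l * dist x (y - g) := add_le_add (infDist_zero_of_mem hg).le (hlip x _)
    _ = l * inclusionDefect G y x := by rw [zero_add, hdist]

theorem mem_interior_setOf_sub_mem_of_sub_mem_interior [NormedSpace ℝ E]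
    (hcp : ∀ x, IsCompact (G x)) (hcv : ∀ x, Convex ℝ (G x)) (hne : ∀ x, (G x).Nonempty)
    (hfin : ∀ x z, hausdorffEDist (G x) (G z) ≠ ⊤)
    (hlip : ∀ x z, hausdorffDist (G x) (G z) ≤ l * dist x z) (hl₀ : 0 ≤ l) {y x : E}
    (hx : y - x ∈ interior (G x)) : x ∈ interior {z | y - z ∈ G z} := by
  obtain ⟨ε, hε, hball⟩ := Metric.mem_nhds_iff.1 (mem_interior_iff_mem_nhds.1 hx)
  refine mem_interior_iff_mem_nhds.2 (Metric.mem_nhds_iff.2 ⟨ε / (1 + l), by positivity, ?_⟩)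
  intro z hz
  rw [mem_ball, lt_div_iff₀ (by linarith)] at hz
  refine (hcp z).ball_subset_of_hausdorffDist_le (hcv z) (hne z) hball (hfin x z) (hlip x z) ?_
  rw [mem_ball, dist_sub_left, dist_comm x z]
  linarith

end InclusionDefect

theorem stmt1 {d : ℕ} (G : (Fin d → ℝ) → Set (Fin d → ℝ))
    (hne : ∀ x, (G x).Nonempty) (hcv : ∀ x, Convex ℝ (G x))
    (hcp : ∀ x, IsCompact (G x))
    (l : ℝ) (hl : l < 1)
    (hlip : ∀ x y, hausdorffDist (G x) (G y) ≤ l * dist x y)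
    (x0 yhat : Fin d → ℝ) (hnotin : yhat ∉ {x0} + G x0) :
    ∃ xhat : Fin d → ℝ, yhat ∈ {xhat} + frontier (G xhat) ∧
      dist x0 xhat ≤ infDist yhat ({x0} + G x0) / (1 - l) := by
  rcases lt_or_ge l 0 with hl₀ | hl₀
  · -- a negative Lipschitz constant forces the space to be a single point
    have hpt (x : Fin d → ℝ) : x = x0 := dist_le_zero.1 <| by
      nlinarith [hlip x x0, hausdorffDist_nonneg (s := G x) (t := G x0),
        dist_nonneg (x := x) (y := x0)]
    obtain ⟨g, hg⟩ := hne x0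
    exact absurd ⟨x0, rfl, g, hg, (hpt _).trans (hpt _).symm⟩ hnotin
  have hfin (x z : Fin d → ℝ) : hausdorffEDist (G x) (G z) ≠ ⊤ :=
    hausdorffEDist_ne_top_of_nonempty_of_bounded (hne x) (hne z) (hcp x).isBounded
      (hcp z).isBounded
  have hmem_iff (x : Fin d → ℝ) : inclusionDefect G yhat x = 0 ↔ yhat - x ∈ G x :=
    inclusionDefect_eq_zero_iff (hcp x).isClosed (hne x) yhat
  set S := {x | yhat - x ∈ G x}
  have hS : IsClosed S := by
    simpa only [hmem_iff] using isClosed_eq (continuous_inclusionDefect hfin hlip yhat)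
      (continuous_const (y := (0 : ℝ)))
  obtain ⟨xs, hxs, hxs_dist⟩ := exists_eq_zero_of_geometric_descent
    (continuous_inclusionDefect hfin hlip yhat) hl₀ hl
    (exists_dist_le_inclusionDefect_le_mul hcp hne hfin hlip yhat) x0
  replace hxs : xs ∈ S := (hmem_iff xs).1 hxs
  obtain ⟨xhat, hxhat, hxhat_dist⟩ := hS.exists_infDist_eq_dist ⟨xs, hxs⟩ x0
  have hx0 : x0 ∉ S := fun h => hnotin ⟨x0, rfl, yhat - x0, h, add_sub_cancel _ _⟩
  have hint : xhat ∉ interior S := fun h => hx0 <|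
    eq_of_mem_interior_of_forall_dist_le h
      (fun z hz => hxhat_dist ▸ infDist_le_dist_of_mem hz) ▸ hxhat
  refine ⟨xhat, ⟨xhat, rfl, yhat - xhat, ?_, add_sub_cancel _ _⟩, ?_⟩
  · rw [(hcp xhat).isClosed.frontier_eq]
    exact ⟨hxhat, fun h =>
      hint (mem_interior_setOf_sub_mem_of_sub_mem_interior hcp hcv hne hfin hlip hl₀ h)⟩
  · rw [← inclusionDefect_eq_infDist_singleton_add, ← hxhat_dist]
    exact (infDist_le_dist_of_mem hxs).trans hxs_dist
end

section
/- Let G : ℝ^d → (convex compact subsets of ℝ^d) be l-Lipschitz w.r.t. the sup-norm Hausdorff distance with l < 1. Then for every ξ ∈ ℝ^d, the set (id + G)⁻¹(ξ) := {x ∈ ℝ^d : ξ ∈ x + G(x)} is nonempty. -/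
/-!
`ξ ∈ x + G x` says exactly that `x` is a fixed point of the set-valued map `F x = ξ - G x`, which
is again an `l`-contraction for the Hausdorff distance. Nadler's argument produces the fixed point:
from `x₀` jump to a nearest point `x₁ ∈ F x₀`, then to a nearest point `x₂ ∈ F x₁`, and so on.
Since `x_{n+1} ∈ F xₙ`, the next jump is at most `hausdorffDist (F xₙ) (F x_{n+1}) ≤ l · dist xₙ x_{n+1}`,
so the jumps decay geometrically and the sequence converges. Along it `infDist xₙ (F xₙ) → 0`, and
`x ↦ infDist x (F x)` is Lipschitz, so the limit `x` satisfies `x ∈ F x` because `F x` is closed.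
-/

open Metric Set Pointwise Filter Topology

section SetValuedContraction

variable {α : Type*} [MetricSpace α] {F : α → Set α} {K : ℝ}

lemma infDist_self_le_mul_dist_of_mem (hne : ∀ x, (F x).Nonempty) (hbdd : ∀ x, Bornology.IsBounded (F x))
    (hF : ∀ x y, hausdorffDist (F x) (F y) ≤ K * dist x y) {a b : α} (hb : b ∈ F a) :
    infDist b (F b) ≤ K * dist a b :=
  (infDist_le_hausdorffDist_of_mem hb <|
    hausdorffEDist_ne_top_of_nonempty_of_bounded (hne a) (hne b) (hbdd a) (hbdd b)).trans (hF a b)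

lemma infDist_self_le_add_mul (hne : ∀ x, (F x).Nonempty) (hbdd : ∀ x, Bornology.IsBounded (F x))
    (hF : ∀ x y, hausdorffDist (F x) (F y) ≤ K * dist x y) (x y : α) :
    infDist x (F x) ≤ infDist y (F y) + (1 + K) * dist x y := by
  have hfin := hausdorffEDist_ne_top_of_nonempty_of_bounded (hne y) (hne x) (hbdd y) (hbdd x)
  calc infDist x (F x) ≤ infDist x (F y) + hausdorffDist (F y) (F x) :=
        infDist_le_infDist_add_hausdorffDist hfin
    _ ≤ infDist y (F y) + dist x y + K * dist y x :=
        add_le_add infDist_le_infDist_add_dist (hF y x)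
    _ = infDist y (F y) + (1 + K) * dist x y := by rw [dist_comm y x]; ring

lemma continuous_infDist_self (hne : ∀ x, (F x).Nonempty) (hbdd : ∀ x, Bornology.IsBounded (F x))
    (hF : ∀ x y, hausdorffDist (F x) (F y) ≤ K * dist x y) :
    Continuous fun x => infDist x (F x) :=
  (LipschitzWith.of_le_add_mul' (1 + K) (infDist_self_le_add_mul hne hbdd hF)).continuous

theorem exists_mem_self_of_hausdorffDist_le [CompleteSpace α] [Nonempty α]
    (hne : ∀ x, (F x).Nonempty) (hcpt : ∀ x, IsCompact (F x)) (hK : K < 1)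
    (hF : ∀ x y, hausdorffDist (F x) (F y) ≤ K * dist x y) : ∃ x, x ∈ F x := by
  wlog hK0 : 0 ≤ K generalizing K
  · refine this zero_lt_one (fun x y => (hF x y).trans ?_) le_rfl
    exact mul_le_mul_of_nonneg_right (not_le.1 hK0).le dist_nonneg
  have hbdd : ∀ x, Bornology.IsBounded (F x) := fun x => (hcpt x).isBounded
  choose next hnext_mem hnext_dist using fun x => (hcpt x).exists_infDist_eq_dist (hne x) x
  set u : ℕ → α := fun n => next^[n] (Classical.arbitrary α)
  have hu_succ (n : ℕ) : u (n + 1) = next (u n) := Function.iterate_succ_apply' next n _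
  have hu_dist (n : ℕ) : infDist (u n) (F (u n)) = dist (u n) (u (n + 1)) := by
    rw [hu_succ, hnext_dist]
  have hu_geom (n : ℕ) : dist (u n) (u (n + 1)) ≤ dist (u 0) (u 1) * K ^ n := by
    induction n with
    | zero => simp
    | succ n ih =>
      have hmem : u (n + 1) ∈ F (u n) := hu_succ n ▸ hnext_mem (u n)
      calc dist (u (n + 1)) (u (n + 2)) = infDist (u (n + 1)) (F (u (n + 1))) := (hu_dist _).symm
        _ ≤ K * dist (u n) (u (n + 1)) := infDist_self_le_mul_dist_of_mem hne hbdd hF hmem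
        _ ≤ K * (dist (u 0) (u 1) * K ^ n) := by gcongr
        _ = dist (u 0) (u 1) * K ^ (n + 1) := by ring
  obtain ⟨x, hx⟩ := cauchySeq_tendsto_of_complete (cauchySeq_of_le_geometric K _ hK hu_geom)
  have hu_infDist : Tendsto (fun n => infDist (u n) (F (u n))) atTop (𝓝 0) := by
    refine squeeze_zero (fun _ => infDist_nonneg) (fun n => (hu_dist n).trans_le (hu_geom n)) ?_
    simpa using (tendsto_pow_atTop_nhds_zero_of_lt_one hK0 hK).const_mul (dist (u 0) (u 1))
  have hx_infDist : infDist x (F x) = 0 :=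
    tendsto_nhds_unique (((continuous_infDist_self hne hbdd hF).tendsto x).comp hx) hu_infDist
  exact ⟨x, ((hcpt x).isClosed.mem_iff_infDist_zero (hne x)).2 hx_infDist⟩

end SetValuedContraction

theorem stmt2_general {d : ℕ} (G : (Fin d → ℝ) → Set (Fin d → ℝ))
    (hne : ∀ x, (G x).Nonempty)
    (hcp : ∀ x, IsCompact (G x))
    (l : ℝ) (hl : l < 1)
    (hlip : ∀ x y, hausdorffDist (G x) (G y) ≤ l * dist x y)
    (ξ : Fin d → ℝ) :
    {x : Fin d → ℝ | ξ ∈ {x} + G x}.Nonempty := by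
  have hiso : Isometry (ξ - · : (Fin d → ℝ) → Fin d → ℝ) :=
    Isometry.of_dist_eq fun a b => dist_sub_left ξ a b
  obtain ⟨x, g, hg, rfl⟩ := exists_mem_self_of_hausdorffDist_le (F := fun x => (ξ - ·) '' G x)
    (fun x => (hne x).image _) (fun x => (hcp x).image hiso.continuous) hl
    (fun x y => (hausdorffDist_image hiso).trans_le (hlip x y))
  exact ⟨ξ - g, ξ - g, rfl, g, hg, sub_add_cancel ξ g⟩

theorem stmt2 {d : ℕ} (G : (Fin d → ℝ) → Set (Fin d → ℝ))
    (hne : ∀ x, (G x).Nonempty) (hcv : ∀ x, Convex ℝ (G x))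
    (hcp : ∀ x, IsCompact (G x))
    (l : ℝ) (hl : l < 1)
    (hlip : ∀ x y, hausdorffDist (G x) (G y) ≤ l * dist x y)
    (ξ : Fin d → ℝ) :
    {x : Fin d → ℝ | ξ ∈ {x} + G x}.Nonempty :=
  stmt2_general G hne hcp l hl hlip ξ
end

section
/- Let F : ℝ^d → (convex compact subsets of ℝ^d) be L-Lipschitz w.r.t. the sup-norm Hausdorff distance, let h > 0 with Lh < 1, and define Φ(x) := x + hF(x). Let M ⊂ ℝ^d be compact, x ∈ M, and δ := dist∞(x, ∂M) > 0. Then the closed sup-norm ball of radius (1 − Lh)δ around Φ(x) is contained in Φ(M) := ⋃_{m∈M} Φ(m). -/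
open Metric Set Pointwise

theorem stmt4 {d : ℕ} (F : (Fin d → ℝ) → Set (Fin d → ℝ))
    (hne : ∀ x, (F x).Nonempty) (hcv : ∀ x, Convex ℝ (F x))
    (hcp : ∀ x, IsCompact (F x))
    (L h : ℝ) (hh : 0 < h) (hLh : L * h < 1)
    (hlip : ∀ x y, hausdorffDist (F x) (F y) ≤ L * dist x y)
    (M : Set (Fin d → ℝ)) (hM : IsCompact M)
    (x : Fin d → ℝ) (hxM : x ∈ M)
    (hδ : 0 < infDist x (frontier M)) :
    {y : Fin d → ℝ | infDist y ({x} + h • F x) ≤ (1 - L * h) * infDist x (frontier M)}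
      ⊆ ⋃ m ∈ M, ({m} + h • F m) := by
  intro y hy
  simp only [mem_setOf_eq] at hy
  set δ := infDist x (frontier M) with hδdef
  -- d must be positive
  have hd : 0 < d := by
    rcases Nat.eq_zero_or_pos d with rfl | hd
    swap
    · exact hd
    exfalso
    have hMuniv : M = univ := by
      ext z
      have : z = x := funext fun i => i.elim0
      simp [this, hxM]
    rw [hδdef, hMuniv] at hδ
    simp at hδ
  -- L is nonnegative
  have hL : 0 ≤ L := by
    have huv : (fun _ : Fin d => (0:ℝ)) ≠ fun _ => 1 := by
      intro e
      have := congrFun e ⟨0, hd⟩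
      norm_num at this
    have h1 : 0 < dist (fun _ : Fin d => (0:ℝ)) (fun _ => 1) := dist_pos.2 huv
    have h2 : 0 ≤ L * dist (fun _ : Fin d => (0:ℝ)) (fun _ => 1) :=
      hausdorffDist_nonneg.trans (hlip _ _)
    nlinarith
  set r := L * h with hrdef
  have hr0 : 0 ≤ r := mul_nonneg hL hh.le
  have hr1 : r < 1 := hLh
  -- the closed ball of radius δ around x is contained in M
  have hball : ∀ z : Fin d → ℝ, dist x z ≤ δ → z ∈ M := by
    intro z hz
    by_contra hzM
    have hzx : z ≠ x := fun e => hzM (e ▸ hxM)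
    set f : ℝ → (Fin d → ℝ) := fun t => x + t • (z - x) with hf
    have hfc : Continuous f := by fun_prop
    set T : Set ℝ := Icc 0 1 ∩ f ⁻¹' M with hT
    have hT0 : (0:ℝ) ∈ T := by
      constructor
      · exact ⟨le_refl 0, zero_le_one⟩
      · simp [f, hxM]
    have hTc : IsClosed T := isClosed_Icc.inter (hM.isClosed.preimage hfc)
    have hTb : BddAbove T := (bddAbove_Icc).mono inter_subset_left
    set t := sSup T with ht
    have htT : t ∈ T := hTc.csSup_mem ⟨0, hT0⟩ hTb
    have ht0 : 0 ≤ t := htT.1.1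
    have ht1 : t ≤ 1 := htT.1.2
    have htne : t ≠ 1 := by
      intro e
      apply hzM
      have h2 := htT.2
      rw [e] at h2
      simpa [f] using h2
    have htlt : t < 1 := lt_of_le_of_ne ht1 htne
    have hfront : f t ∈ frontier M := by
      rw [frontier_eq_closure_inter_closure]
      refine ⟨subset_closure htT.2, ?_⟩
      have htend : Filter.Tendsto (fun n : ℕ => f (t + (1-t)/(n+1))) Filter.atTop (nhds (f t)) := by
        apply (hfc.tendsto t).comp
        have : Filter.Tendsto (fun n : ℕ => (1-t)/(n+1)) Filter.atTop (nhds 0) := by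
          apply Filter.Tendsto.const_div_atTop
          exact Filter.tendsto_atTop_add_const_right _ 1 tendsto_natCast_atTop_atTop
        have := this.const_add t
        simpa using this
      refine mem_closure_of_tendsto htend (Filter.Eventually.of_forall fun n => ?_)
      intro hmem
      have hnp : (0:ℝ) < (n:ℝ) + 1 := by positivity
      have hqpos : 0 < (1-t)/((n:ℝ)+1) := div_pos (by linarith) hnp
      have hq1 : (1-t)/((n:ℝ)+1) ≤ 1 - t := by
        rw [div_le_iff₀ hnp]
        nlinarith [Nat.cast_nonneg (α := ℝ) n]
      have hsle : t + (1-t)/((n:ℝ)+1) ≤ t :=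
        le_csSup hTb ⟨⟨by linarith, by linarith⟩, hmem⟩
      linarith
    have hge : δ ≤ dist x (f t) := infDist_le_dist_of_mem hfront
    have heq : dist x (f t) = t * dist x z := by
      rw [dist_eq_norm, dist_eq_norm]
      have : x - f t = (-t) • (z - x) := by
        simp only [f]
        module
      rw [this, norm_smul, norm_neg, Real.norm_eq_abs, abs_of_nonneg ht0,
        show x - z = -(z - x) by abel, norm_neg]
    have hzp : 0 < dist x z := dist_pos.2 (Ne.symm hzx)
    nlinarith
  -- basic facts about the sets {m} + h • F m
  have hScp : ∀ m : Fin d → ℝ, IsCompact ({m} + h • F m) := fun m =>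
    isCompact_singleton.add ((hcp m).smul h)
  have hSne : ∀ m : Fin d → ℝ, ({m} + h • F m).Nonempty := fun m =>
    (singleton_nonempty m).add ((hne m).smul_set)
  have hfin : ∀ m₁ m₂ : Fin d → ℝ, EMetric.hausdorffEdist (F m₁) (F m₂) ≠ ⊤ := fun m₁ m₂ =>
    hausdorffEdist_ne_top_of_nonempty_of_bounded (hne m₁) (hne m₂) (hcp m₁).isBounded
      (hcp m₂).isBounded
  have hmemS : ∀ (m p : Fin d → ℝ), p ∈ F m → m + h • p ∈ {m} + h • F m := by
    intro m p hp
    exact add_mem_add (mem_singleton m) (smul_mem_smul_set hp)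
  -- key contraction step
  have key : ∀ m : Fin d → ℝ, ∃ m', dist m' m = infDist y ({m} + h • F m) ∧
      infDist y ({m'} + h • F m') ≤ r * infDist y ({m} + h • F m) := by
    intro m
    obtain ⟨z, hzS, hz⟩ := (hScp m).exists_infDist_eq_dist (hSne m) y
    rw [Set.mem_add] at hzS
    obtain ⟨a, ha, b, ⟨p, hpF, hpb⟩, hab⟩ := hzS
    rw [mem_singleton_iff] at ha
    rw [ha] at hab
    subst hpb
    subst hab
    refine ⟨y - h • p, ?_, ?_⟩
    · rw [hz, dist_eq_norm, dist_eq_norm]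
      congr 1
      abel
    · obtain ⟨q, hqF, hq⟩ := (hcp (y - h • p)).exists_infDist_eq_dist (hne (y - h • p)) p
      have hdq : dist p q ≤ L * dist m (y - h • p) :=
        hq ▸ ((infDist_le_hausdorffDist_of_mem hpF (hfin m (y - h • p))).trans
          (hlip m (y - h • p)))
      have h1 : infDist y ({y - h • p} + h • F (y - h • p)) ≤ dist y ((y - h • p) + h • q) :=
        infDist_le_dist_of_mem (hmemS _ _ hqF)
      have h2 : dist y ((y - h • p) + h • q) = h * dist p q := by
        rw [dist_eq_norm, dist_eq_norm]
        have : y - ((y - h • p) + h • q) = h • (p - q) := by module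
        rw [this, norm_smul, Real.norm_eq_abs, abs_of_pos hh]
      have h3 : dist m (y - h • p) = infDist y ({m} + h • F m) := by
        rw [dist_comm, hz, dist_eq_norm, dist_eq_norm]
        congr 1
        abel
      calc infDist y ({y - h • p} + h • F (y - h • p)) ≤ h * dist p q := h1.trans_eq h2
        _ ≤ h * (L * dist m (y - h • p)) := by nlinarith
        _ = r * infDist y ({m} + h • F m) := by rw [h3]; ring
  -- continuity-type estimate
  have step2 : ∀ m₁ m₂ : Fin d → ℝ, infDist y ({m₂} + h • F m₂) ≤
      infDist y ({m₁} + h • F m₁) + (1 + L * h) * dist m₁ m₂ := by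
    intro m₁ m₂
    obtain ⟨z, hzS, hz⟩ := (hScp m₁).exists_infDist_eq_dist (hSne m₁) y
    rw [Set.mem_add] at hzS
    obtain ⟨a, ha, b, ⟨p, hpF, hpb⟩, hab⟩ := hzS
    rw [mem_singleton_iff] at ha
    rw [ha] at hab
    subst hpb
    subst hab
    obtain ⟨q, hqF, hq⟩ := (hcp m₂).exists_infDist_eq_dist (hne m₂) p
    have hdq : dist p q ≤ L * dist m₁ m₂ :=
      hq ▸ ((infDist_le_hausdorffDist_of_mem hpF (hfin m₁ m₂)).trans (hlip m₁ m₂))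
    have h1 : infDist y ({m₂} + h • F m₂) ≤ dist y (m₂ + h • q) :=
      infDist_le_dist_of_mem (hmemS _ _ hqF)
    have h2 : dist y (m₂ + h • q) ≤ dist y (m₁ + h • p) + (dist m₁ m₂ + h * dist p q) := by
      refine (dist_triangle y (m₁ + h • p) (m₂ + h • q)).trans ?_
      gcongr
      rw [dist_eq_norm, dist_eq_norm, dist_eq_norm]
      have : (m₁ + h • p) - (m₂ + h • q) = (m₁ - m₂) + h • (p - q) := by module
      rw [this]
      refine (norm_add_le _ _).trans ?_
      rw [norm_smul, Real.norm_eq_abs, abs_of_pos hh]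
    have hd2 : (0:ℝ) ≤ dist m₁ m₂ := dist_nonneg
    calc infDist y ({m₂} + h • F m₂) ≤ dist y (m₁ + h • p) + (dist m₁ m₂ + h * dist p q) :=
          h1.trans h2
      _ ≤ infDist y ({m₁} + h • F m₁) + (1 + L * h) * dist m₁ m₂ := by
          rw [← hz]; nlinarith
  choose g hg1 hg2 using key
  set seq : ℕ → (Fin d → ℝ) := fun n => g^[n] x with hseq
  have hsucc : ∀ n, seq (n+1) = g (seq n) := fun n => Function.iterate_succ_apply' g n x
  set C := infDist y ({x} + h • F x) with hC
  have hC0 : 0 ≤ C := infDist_nonneg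
  have hεb : ∀ n, infDist y ({seq n} + h • F (seq n)) ≤ C * r ^ n := by
    intro n
    induction n with
    | zero =>
      have hs0 : seq 0 = x := rfl
      rw [hs0, pow_zero, mul_one]
    | succ n ih =>
      rw [hsucc]
      calc infDist y ({g (seq n)} + h • F (g (seq n))) ≤ r * infDist y ({seq n} + h • F (seq n)) :=
            hg2 (seq n)
        _ ≤ r * (C * r ^ n) := by nlinarith [infDist_nonneg (x := y) (s := {seq n} + h • F (seq n))]
        _ = C * r ^ (n+1) := by ring
  have hdistseq : ∀ n, dist (seq n) (seq (n+1)) ≤ C * r ^ n := by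
    intro n
    rw [hsucc, dist_comm, hg1 (seq n)]
    exact hεb n
  have hcauchy : CauchySeq seq := cauchySeq_of_le_geometric r C hr1 hdistseq
  obtain ⟨m', hm'⟩ := cauchySeq_tendsto_of_complete hcauchy
  have hd0 : dist x m' ≤ C / (1 - r) := by
    have := dist_le_of_le_geometric_of_tendsto₀ r C hr1 hdistseq hm'
    simpa [seq] using this
  have hm'M : m' ∈ M := by
    apply hball
    refine hd0.trans ?_
    rw [div_le_iff₀ (by linarith)]
    have : C ≤ (1 - r) * δ := hy
    nlinarith
  -- show y ∈ {m'} + h • F m'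
  have htend0 : Filter.Tendsto
      (fun n => infDist y ({seq n} + h • F (seq n)) + (1 + L * h) * dist (seq n) m')
      Filter.atTop (nhds 0) := by
    have t1 : Filter.Tendsto (fun n => infDist y ({seq n} + h • F (seq n))) Filter.atTop
        (nhds 0) := by
      apply squeeze_zero (fun n => infDist_nonneg) hεb
      simpa using (tendsto_pow_atTop_nhds_zero_of_lt_one hr0 hr1).const_mul C
    have t2 : Filter.Tendsto (fun n => (1 + L * h) * dist (seq n) m') Filter.atTop (nhds 0) := by
      have := tendsto_iff_dist_tendsto_zero.1 hm'
      simpa using this.const_mul (1 + L * h)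
    simpa using t1.add t2
  have hle0 : infDist y ({m'} + h • F m') ≤ 0 :=
    ge_of_tendsto' htend0 fun n => step2 (seq n) m'
  have hzero : infDist y ({m'} + h • F m') = 0 := le_antisymm hle0 infDist_nonneg
  have hyS : y ∈ {m'} + h • F m' :=
    ((hScp m').isClosed.mem_iff_infDist_zero (hSne m')).2 hzero
  exact mem_biUnion hm'M hyS
end

section
/- Let F : ℝ^d → (convex compact subsets of ℝ^d) be L-Lipschitz w.r.t. the sup-norm Hausdorff distance, h > 0 with Lh < 1, and Φ(x) := x + hF(x). Let M ⊂ ℝ^d be compact. Then for every y ∈ ∂(Φ(M)) (the boundary of the image set Φ(M) = ⋃_{m∈M} Φ(m)), the set Φ⁻¹(y) ∩ M := {x ∈ M : y ∈ Φ(x)} is nonempty and contained in ∂M; moreover, for every x ∈ ∂M with y ∈ Φ(x), one has y ∈ ∂Φ(x). -/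
open Metric Set Pointwise
open Filter Topology

section Aux

variable {E : Type*} [NormedAddCommGroup E] [NormedSpace ℝ E]

lemma aux_mem_phi {x v : E} {h : ℝ} {s : Set E} :
    v ∈ {x} + h • s ↔ ∃ g ∈ s, v = x + h • g := by
  simp only [Set.mem_add, Set.mem_singleton_iff, Set.mem_smul_set]
  constructor
  · rintro ⟨a, rfl, b, ⟨g, hg, rfl⟩, rfl⟩; exact ⟨g, hg, rfl⟩
  · rintro ⟨g, hg, rfl⟩; exact ⟨x, rfl, h • g, ⟨g, hg, rfl⟩, rfl⟩

omit [NormedSpace ℝ E] in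
lemma aux_infDist_le {F : E → Set E} (hne : ∀ x, (F x).Nonempty)
    (hcp : ∀ x, IsCompact (F x)) {K : ℝ}
    (hlip : ∀ x y, hausdorffDist (F x) (F y) ≤ K * dist x y)
    {a b g : E} (hg : g ∈ F a) : infDist g (F b) ≤ K * dist a b :=
  le_trans (infDist_le_hausdorffDist_of_mem hg
    (hausdorffEdist_ne_top_of_nonempty_of_bounded (hne a) (hne b)
      (hcp a).isBounded (hcp b).isBounded)) (hlip a b)

lemma aux_fixed [CompleteSpace E] {F : E → Set E} (hne : ∀ x, (F x).Nonempty)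
    (hcp : ∀ x, IsCompact (F x)) {K h : ℝ} (hh : 0 < h) (hK : 0 ≤ K) (hKh : K * h < 1)
    (hlip : ∀ x y, hausdorffDist (F x) (F y) ≤ K * dist x y)
    (x y' f0 : E) (hf0 : f0 ∈ F x) :
    ∃ z fz, fz ∈ F z ∧ y' = z + h • fz ∧
      dist z x ≤ dist (x + h • f0) y' / (1 - K * h) := by
  classical
  set r : ℝ := dist (x + h • f0) y' with hrdef
  have hpick : ∀ (z g : E), ∃ w ∈ F z, infDist g (F z) = dist g w := fun z g =>
    (hcp z).exists_infDist_eq_dist (hne z) g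
  choose pick hpick1 hpick2 using hpick
  set p : ℕ → E × E := fun n =>
    Nat.rec (x, f0) (fun _ q => (y' - h • q.2, pick (y' - h • q.2) q.2)) n with hp
  set z : ℕ → E := fun n => (p n).1 with hzdef
  set f : ℕ → E := fun n => (p n).2 with hfdef
  have hz0 : z 0 = x := rfl
  have hf00 : f 0 = f0 := rfl
  have hzs : ∀ n, z (n + 1) = y' - h • f n := fun n => rfl
  have hfs : ∀ n, f (n + 1) = pick (z (n + 1)) (f n) := fun n => rfl
  have hmem : ∀ n, f n ∈ F (z n) := by
    intro n
    induction n with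
    | zero => exact hf0
    | succ n ih => rw [hfs]; exact hpick1 _ _
  have hdf : ∀ n, dist (f n) (f (n + 1)) ≤ K * dist (z n) (z (n + 1)) := by
    intro n
    have e : dist (f n) (f (n + 1)) = infDist (f n) (F (z (n + 1))) := by
      rw [hfs]; exact (hpick2 _ _).symm
    rw [e]
    exact aux_infDist_le hne hcp hlip (hmem n)
  have hdz : ∀ n, dist (z n) (z (n + 1)) ≤ r * (K * h) ^ n := by
    intro n
    induction n with
    | zero =>
      have e1 : z (0 + 1) = y' - h • f0 := by rw [hzs 0, hf00]
      have e2 : x - (y' - h • f0) = x + h • f0 - y' := by abel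
      rw [pow_zero, mul_one, hz0, e1, hrdef, dist_eq_norm, dist_eq_norm, e2]
    | succ n ih =>
      have e : z (n + 1) - z (n + 2) = h • (f (n + 1) - f n) := by
        rw [hzs n, hzs (n + 1), smul_sub]; abel
      have e2 : dist (z (n + 1)) (z (n + 2)) = h * dist (f n) (f (n + 1)) := by
        rw [dist_eq_norm, e, norm_smul, Real.norm_eq_abs, abs_of_pos hh,
          dist_comm, dist_eq_norm]
      calc dist (z (n + 1)) (z (n + 2)) = h * dist (f n) (f (n + 1)) := e2
        _ ≤ h * (K * dist (z n) (z (n + 1))) :=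
            mul_le_mul_of_nonneg_left (hdf n) hh.le
        _ ≤ h * (K * (r * (K * h) ^ n)) :=
            mul_le_mul_of_nonneg_left (mul_le_mul_of_nonneg_left ih hK) hh.le
        _ = r * (K * h) ^ (n + 1) := by ring
  have hcauchy : CauchySeq z := cauchySeq_of_le_geometric (K * h) r hKh hdz
  obtain ⟨zl, hzl⟩ := cauchySeq_tendsto_of_complete hcauchy
  have hdistzl : dist zl x ≤ r / (1 - K * h) := by
    rw [dist_comm]
    exact dist_le_of_le_geometric_of_tendsto₀ (K * h) r hKh hdz hzl
  set fl : E := h⁻¹ • (y' - zl) with hfl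
  have hfz : ∀ n, f n = h⁻¹ • (y' - z (n + 1)) := by
    intro n
    have e : y' - (y' - h • f n) = h • f n := by abel
    rw [hzs n, e, inv_smul_smul₀ hh.ne']
  have hftend : Tendsto f atTop (𝓝 fl) := by
    have h1 : Tendsto (fun n => z (n + 1)) atTop (𝓝 zl) :=
      hzl.comp (tendsto_add_atTop_nat 1)
    have heq : f = fun n => h⁻¹ • (y' - z (n + 1)) := funext hfz
    rw [heq]
    exact Tendsto.const_smul (tendsto_const_nhds.sub h1) _
  have h3 : ∀ n, infDist (f n) (F zl) ≤ K * dist (z n) zl := fun n =>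
    aux_infDist_le hne hcp hlip (hmem n)
  have h4 : Tendsto (fun n => infDist (f n) (F zl)) atTop (𝓝 (infDist fl (F zl))) :=
    ((continuous_infDist_pt (F zl)).tendsto fl).comp hftend
  have h5 : Tendsto (fun n => K * dist (z n) zl) atTop (𝓝 0) := by
    have hd : Tendsto (fun n => dist (z n) zl) atTop (𝓝 0) :=
      tendsto_iff_dist_tendsto_zero.mp hzl
    simpa using hd.const_mul K
  have h6 : infDist fl (F zl) ≤ 0 := le_of_tendsto_of_tendsto' h4 h5 h3
  have h7 : infDist fl (F zl) = 0 := le_antisymm h6 infDist_nonneg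
  have hflmem : fl ∈ F zl := ((hcp zl).isClosed.mem_iff_infDist_zero (hne zl)).2 h7
  refine ⟨zl, fl, hflmem, ?_, hdistzl⟩
  rw [hfl, smul_inv_smul₀ hh.ne']
  abel

lemma aux_closed {F : E → Set E} (hne : ∀ x, (F x).Nonempty)
    (hcp : ∀ x, IsCompact (F x)) {K h : ℝ} (hh : 0 < h)
    (hlip : ∀ a b, hausdorffDist (F a) (F b) ≤ K * dist a b)
    {M : Set E} (hM : IsCompact M) :
    IsClosed (⋃ m ∈ M, ({m} + h • F m)) := by
  apply IsSeqClosed.isClosed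
  intro u q hu huq
  have hsel : ∀ n, ∃ m ∈ M, ∃ g ∈ F m, u n = m + h • g := by
    intro n
    obtain ⟨m, hm, hmem⟩ := mem_iUnion₂.1 (hu n)
    obtain ⟨g, hg, he⟩ := aux_mem_phi.1 hmem
    exact ⟨m, hm, g, hg, he⟩
  choose m hm g hg hu' using hsel
  obtain ⟨a, haM, φ, hφ, hma⟩ := hM.tendsto_subseq hm
  have h1 : Tendsto (fun n => u (φ n)) atTop (𝓝 q) := huq.comp hφ.tendsto_atTop
  have hgt : Tendsto (fun n => g (φ n)) atTop (𝓝 (h⁻¹ • (q - a))) := by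
    have he : (fun n => g (φ n)) = fun n => h⁻¹ • (u (φ n) - m (φ n)) := by
      funext n
      rw [hu' (φ n), add_sub_cancel_left, inv_smul_smul₀ hh.ne']
    rw [he]
    exact Tendsto.const_smul (h1.sub hma) _
  have h3 : ∀ n, infDist (g (φ n)) (F a) ≤ K * dist (m (φ n)) a := fun n =>
    aux_infDist_le hne hcp hlip (hg (φ n))
  have h4 : Tendsto (fun n => infDist (g (φ n)) (F a)) atTop
      (𝓝 (infDist (h⁻¹ • (q - a)) (F a))) :=
    ((continuous_infDist_pt (F a)).tendsto _).comp hgt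
  have h5 : Tendsto (fun n => K * dist (m (φ n)) a) atTop (𝓝 0) := by
    have hd : Tendsto (fun n => dist (m (φ n)) a) atTop (𝓝 0) :=
      tendsto_iff_dist_tendsto_zero.mp hma
    simpa using hd.const_mul K
  have h6 : infDist (h⁻¹ • (q - a)) (F a) = 0 :=
    le_antisymm (le_of_tendsto_of_tendsto' h4 h5 h3) infDist_nonneg
  have hmem : h⁻¹ • (q - a) ∈ F a :=
    ((hcp a).isClosed.mem_iff_infDist_zero (hne a)).2 h6
  refine mem_iUnion₂.2 ⟨a, haM, aux_mem_phi.2 ⟨h⁻¹ • (q - a), hmem, ?_⟩⟩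
  rw [smul_inv_smul₀ hh.ne']
  abel

end Aux

theorem stmt5 {d : ℕ} (F : (Fin d → ℝ) → Set (Fin d → ℝ))
    (hne : ∀ x, (F x).Nonempty) (hcv : ∀ x, Convex ℝ (F x))
    (hcp : ∀ x, IsCompact (F x))
    (L h : ℝ) (hh : 0 < h) (hLh : L * h < 1)
    (hlip : ∀ x y, hausdorffDist (F x) (F y) ≤ L * dist x y)
    (M : Set (Fin d → ℝ)) (hM : IsCompact M)
    (y : Fin d → ℝ) (hy : y ∈ frontier (⋃ m ∈ M, ({m} + h • F m))) :
    ({x ∈ M | y ∈ {x} + h • F x}).Nonempty ∧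
    ({x ∈ M | y ∈ {x} + h • F x}) ⊆ frontier M ∧
    ∀ x ∈ frontier M, y ∈ {x} + h • F x → y ∈ frontier ({x} + h • F x) := by
  classical
  set S := ⋃ m ∈ M, ({m} + h • F m) with hSdef
  set K := max L 0 with hKdef
  have hK0 : 0 ≤ K := le_max_right _ _
  have hKh : K * h < 1 := by
    rw [hKdef, max_mul_of_nonneg _ _ hh.le, zero_mul]
    exact max_lt hLh one_pos
  have hlip' : ∀ a b, hausdorffDist (F a) (F b) ≤ K * dist a b := fun a b =>
    (hlip a b).trans (mul_le_mul_of_nonneg_right (le_max_left _ _) dist_nonneg)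
  have hScl : IsClosed S := aux_closed hne hcp hh hlip' hM
  rw [← closure_diff_interior] at hy
  have hyS : y ∈ S := hScl.closure_eq ▸ hy.1
  have hynotint : y ∉ interior S := hy.2
  have hsub : ∀ x ∈ M, ({x} + h • F x) ⊆ S := by
    intro x hx v hv
    exact mem_iUnion₂.2 ⟨x, hx, hv⟩
  have h1Kh : 0 < 1 - K * h := by linarith
  refine ⟨?_, ?_, ?_⟩
  · obtain ⟨m, hm, hmem⟩ := mem_iUnion₂.1 hyS
    exact ⟨m, hm, hmem⟩
  · rintro x ⟨hxM, hyx⟩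
    rw [← closure_diff_interior]
    refine ⟨subset_closure hxM, fun hxint => ?_⟩
    obtain ⟨ε, hε, hball⟩ := Metric.isOpen_iff.1 isOpen_interior x hxint
    obtain ⟨f0, hf0, hyeq⟩ := aux_mem_phi.1 hyx
    apply hynotint
    rw [mem_interior_iff_mem_nhds, Metric.mem_nhds_iff]
    refine ⟨ε * (1 - K * h), by positivity, ?_⟩
    intro y' hy'
    obtain ⟨z, fz, hfz, hy'eq, hdz⟩ :=
      aux_fixed hne hcp hh hK0 hKh hlip' x y' f0 hf0
    have hdy : dist (x + h • f0) y' < ε * (1 - K * h) := by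
      rw [← hyeq, dist_comm]
      exact hy'
    have hzball : z ∈ ball x ε := by
      rw [mem_ball]
      calc dist z x ≤ dist (x + h • f0) y' / (1 - K * h) := hdz
        _ < ε * (1 - K * h) / (1 - K * h) := by gcongr
        _ = ε := by field_simp
    have hzM : z ∈ M := interior_subset (hball hzball)
    exact hsub z hzM (aux_mem_phi.2 ⟨fz, hfz, hy'eq⟩)
  · intro x hxfr hyx
    have hxM : x ∈ M := hM.isClosed.frontier_subset hxfr
    rw [← closure_diff_interior]
    refine ⟨subset_closure hyx, fun hint => ?_⟩
    exact hynotint (interior_mono (hsub x hxM) hint)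
end

section
/- Let Δ_ρ = ρℤ^d and let C = B_α(K)_∞ ⊂ ℝ^d be the closed sup-norm α-neighbourhood of a nonempty convex compact set K, where α ≥ ρ/2. Then C ∩ Δ_ρ is nonempty and chain-connected: for any two grid points y, ỹ ∈ C ∩ Δ_ρ there is a finite sequence c_0 = y, c_1, …, c_N = ỹ of points in C ∩ Δ_ρ with |c_{n+1} − c_n|∞ = ρ for all n (or N = 0 and y = ỹ). -/
open Metric Set

/-- The grid `ρ ℤ^d` of spacing `ρ` in `ℝ^d`. -/
def grid (ρ : ℝ) (d : ℕ) : Set (Fin d → ℝ) :=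
  {x | ∀ i, ∃ k : ℤ, x i = ρ * k}

/-- `x` and `y` are connected by a chain of spacing `ρ` inside `S`:
either `N = 0` and `x = y`, or consecutive points are at sup-distance exactly `ρ`. -/
def ChainConn (ρ : ℝ) {d : ℕ} (S : Set (Fin d → ℝ)) (x y : Fin d → ℝ) : Prop :=
  ∃ (N : ℕ) (c : ℕ → Fin d → ℝ), c 0 = x ∧ c N = y ∧
    (∀ n < N, dist (c (n + 1)) (c n) = ρ) ∧ (∀ n ≤ N, c n ∈ S)

/-- A set of grid points is chain-connected if any two of its points are
joined by a chain within the set. -/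
def ChainConnected (ρ : ℝ) {d : ℕ} (S : Set (Fin d → ℝ)) : Prop :=
  ∀ x ∈ S, ∀ y ∈ S, ChainConn ρ S x y

lemma chain_concat {ρ : ℝ} {d : ℕ} {S : Set (Fin d → ℝ)} {x y z : Fin d → ℝ}
    (h1 : ChainConn ρ S x y) (h2 : ChainConn ρ S y z) : ChainConn ρ S x z := by
  obtain ⟨N1, c1, hc10, hc1N, hc1d, hc1m⟩ := h1
  obtain ⟨N2, c2, hc20, hc2N, hc2d, hc2m⟩ := h2
  classical
  refine ⟨N1 + N2, fun n => if n < N1 then c1 n else c2 (n - N1), ?_, ?_, ?_, ?_⟩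
  · by_cases h : 0 < N1
    · simp [h, hc10]
    · have hN : N1 = 0 := by omega
      have hx : x = y := by rw [← hc10, ← hc1N, hN]
      simp [hN, hc20, hx]
  · have : ¬ (N1 + N2 < N1) := by omega
    simp [this, hc2N]
  · intro n hn
    by_cases h : n + 1 ≤ N1
    · have h1 : n < N1 := by omega
      have h2 : n + 1 < N1 ∨ n + 1 = N1 := by omega
      rcases h2 with h2 | h2
      · simp [h1, h2]; exact hc1d n h1
      · have : ¬ (n + 1 < N1) := by omega
        simp only [this, if_neg this, if_pos h1]
        have : c2 (n + 1 - N1) = c1 (n+1) := by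
          rw [h2]; simp [hc20, ← hc1N]
        rw [this]; exact hc1d n h1
    · have h1 : ¬ (n < N1) := by omega
      have h2 : ¬ (n + 1 < N1) := by omega
      simp only [if_neg h1, if_neg h2]
      have : n + 1 - N1 = (n - N1) + 1 := by omega
      rw [this]
      exact hc2d (n - N1) (by omega)
  · intro n hn
    by_cases h : n < N1
    · simp only [if_pos h]; exact hc1m n (by omega)
    · simp only [if_neg h]; exact hc2m (n - N1) (by omega)

lemma key {d : ℕ} (ρ α : ℝ) (hρ : 0 < ρ) (hα : ρ / 2 ≤ α)
    (K : Set (Fin d → ℝ)) (hKne : K.Nonempty) (hKcv : Convex ℝ K)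
    (hKcp : IsCompact K) :
    ∀ n : ℕ, ∀ y ∈ ({x : Fin d → ℝ | infDist x K ≤ α} ∩ grid ρ d),
      ∀ z ∈ ({x : Fin d → ℝ | infDist x K ≤ α} ∩ grid ρ d),
      (∀ i, |y i - z i| ≤ n * ρ) →
      ChainConn ρ ({x : Fin d → ℝ | infDist x K ≤ α} ∩ grid ρ d) y z := by
  have hα0 : (0:ℝ) ≤ α := by linarith
  intro n
  induction n using Nat.strong_induction_on with
  | _ n IH =>
  intro y hy z hz hbd
  by_cases hn : n ≤ 1
  · -- base case: all coordinates differ by at most ρ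
    have hbd1 : ∀ i, |y i - z i| ≤ ρ := by
      intro i
      refine (hbd i).trans ?_
      have : (n:ℝ) ≤ 1 := by exact_mod_cast hn
      nlinarith
    by_cases hyz : y = z
    · exact ⟨0, fun _ => y, rfl, hyz, by omega, fun m hm => by simpa using hy⟩
    · have hdist : dist y z = ρ := by
        apply le_antisymm
        · exact (dist_pi_le_iff hρ.le).2 fun i => by rw [Real.dist_eq]; exact hbd1 i
        · obtain ⟨i, hi⟩ : ∃ i, y i ≠ z i := by
            by_contra h; push_neg at h; exact hyz (funext h)
          obtain ⟨a, ha⟩ := hy.2 i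
          obtain ⟨b, hb⟩ := hz.2 i
          have hab : a ≠ b := by rintro rfl; exact hi (ha.trans hb.symm)
          have h1 : (1:ℝ) ≤ |(a:ℝ) - b| := by
            have h0 : (1:ℤ) ≤ |a - b| := Int.one_le_abs (sub_ne_zero.2 hab)
            calc (1:ℝ) ≤ ((|a - b| : ℤ) : ℝ) := by exact_mod_cast h0
            _ = |(a:ℝ) - b| := by push_cast; ring_nf
          have : ρ ≤ |y i - z i| := by
            rw [ha, hb, ← mul_sub, abs_mul, abs_of_pos hρ]
            nlinarith
          calc ρ ≤ |y i - z i| := this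
          _ = dist (y i) (z i) := (Real.dist_eq _ _).symm
          _ ≤ dist y z := dist_le_pi_dist y z i
      exact ⟨1, fun m => if m = 0 then y else z, by simp, by simp, by
          intro m hm
          have : m = 0 := by omega
          simp [this, dist_comm, hdist], by
          intro m hm
          rcases Nat.le_one_iff_eq_zero_or_eq_one.1 hm with h | h <;> simp [h, hy, hz]⟩
  · -- inductive step
    push_neg at hn
    choose a ha using hy.2
    choose b hb using hz.2
    set m : Fin d → ℝ := fun i => (y i + z i) / 2 with hm_def
    obtain ⟨ky, hky, hkyd⟩ := hKcp.exists_infDist_eq_dist hKne y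
    obtain ⟨kz, hkz, hkzd⟩ := hKcp.exists_infDist_eq_dist hKne z
    set k : Fin d → ℝ := fun i => (ky i + kz i) / 2 with hk_def
    have hkK : k ∈ K := by
      have := hKcv hky hkz (by norm_num : (0:ℝ) ≤ 1/2) (by norm_num : (0:ℝ) ≤ 1/2) (by norm_num)
      convert this using 1
      funext i
      simp [hk_def, Pi.smul_apply, smul_eq_mul]
      ring
    have hmk : ∀ i, |m i - k i| ≤ α := by
      intro i
      have h1 : |y i - ky i| ≤ α := by
        calc |y i - ky i| = dist (y i) (ky i) := (Real.dist_eq _ _).symm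
        _ ≤ dist y ky := dist_le_pi_dist y ky i
        _ = infDist y K := hkyd.symm
        _ ≤ α := hy.1
      have h2 : |z i - kz i| ≤ α := by
        calc |z i - kz i| = dist (z i) (kz i) := (Real.dist_eq _ _).symm
        _ ≤ dist z kz := dist_le_pi_dist z kz i
        _ = infDist z K := hkzd.symm
        _ ≤ α := hz.1
      have : m i - k i = ((y i - ky i) + (z i - kz i)) / 2 := by
        simp [hm_def, hk_def]; ring
      rw [this]
      rw [abs_div, abs_of_pos (by norm_num : (0:ℝ) < 2)]
      have := abs_add_le (y i - ky i) (z i - kz i)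
      linarith
    classical
    set g : Fin d → ℝ := fun i =>
      if ∃ t : ℤ, a i + b i = 2 * t then m i
      else if m i ≤ k i then m i + ρ/2 else m i - ρ/2 with hg_def
    have hyi : ∀ i, y i = ρ * a i := ha
    have hzi : ∀ i, z i = ρ * b i := hb
    have hmi : ∀ i, m i = ρ * (a i + b i) / 2 := by
      intro i; simp [hm_def, hyi i, hzi i]; push_cast; ring
    have hgG : ∀ i, ∃ t : ℤ, g i = ρ * t := by
      intro i
      simp only [hg_def]
      by_cases he : ∃ t : ℤ, a i + b i = 2 * t
      · obtain ⟨t, ht⟩ := he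
        have htr : ((a i : ℝ) + (b i : ℝ)) = 2 * (t : ℝ) := by exact_mod_cast ht
        exact ⟨t, by rw [if_pos ⟨t, ht⟩, hmi i, htr]; ring⟩
      · obtain ⟨s, hs⟩ : ∃ s : ℤ, a i + b i = 2 * s + 1 := by
          refine ⟨(a i + b i)/2, ?_⟩
          have := not_exists.1 he ((a i + b i)/2)
          omega
        have hsr : ((a i : ℝ) + (b i : ℝ)) = 2 * (s : ℝ) + 1 := by exact_mod_cast hs
        rw [if_neg he]
        by_cases hle : m i ≤ k i
        · exact ⟨s + 1, by rw [if_pos hle, hmi i, hsr]; push_cast; ring⟩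
        · exact ⟨s, by rw [if_neg hle, hmi i, hsr]; push_cast; ring⟩
    have hmg : ∀ i, |m i - g i| ≤ ρ / 2 := by
      intro i
      simp only [hg_def]
      by_cases he : ∃ t : ℤ, a i + b i = 2 * t
      · rw [if_pos he]; simp; linarith
      · rw [if_neg he]
        by_cases hle : m i ≤ k i
        · rw [if_pos hle]; rw [show m i - (m i + ρ/2) = -(ρ/2) by ring, abs_neg,
            abs_of_pos (by linarith)]
        · rw [if_neg hle]; rw [show m i - (m i - ρ/2) = ρ/2 by ring,
            abs_of_pos (by linarith)]
    have hgk : ∀ i, |g i - k i| ≤ α := by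
      intro i
      have hmki := hmk i
      rw [abs_le] at hmki ⊢
      simp only [hg_def]
      by_cases he : ∃ t : ℤ, a i + b i = 2 * t
      · rw [if_pos he]; exact ⟨hmki.1, hmki.2⟩
      · rw [if_neg he]
        by_cases hle : m i ≤ k i
        · rw [if_pos hle]; constructor <;> [linarith; linarith]
        · rw [if_neg hle]; push_neg at hle; constructor <;> [linarith; linarith]
    have hgC : infDist g K ≤ α := by
      refine le_trans (infDist_le_dist_of_mem hkK) ?_
      exact (dist_pi_le_iff hα0).2 fun i => by rw [Real.dist_eq]; exact hgk i
    have hgS : g ∈ ({x : Fin d → ℝ | infDist x K ≤ α} ∩ grid ρ d) := ⟨hgC, hgG⟩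
    choose c hc using hgG
    -- per-coordinate bounds for recursion
    have hbound : ∀ (w : Fin d → ℝ) (e : Fin d → ℤ), (∀ i, w i = ρ * e i) →
        (∀ i, |w i - m i| ≤ n * ρ / 2) →
        ∀ i, |w i - g i| ≤ ((n - 1 : ℕ) : ℝ) * ρ := by
      intro w e hw hwm i
      have h1 : |w i - g i| ≤ (n * ρ + ρ) / 2 := by
        have := abs_sub_le (w i) (m i) (g i)
        have := hmg i
        have := hwm i
        linarith [abs_sub_le (w i) (m i) (g i)]
      have h2 : w i - g i = ρ * ((e i - c i : ℤ) : ℝ) := by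
        rw [hw i, hc i]; push_cast; ring
      have h3 : (((e i - c i).natAbs : ℕ) : ℝ) * ρ ≤ (n * ρ + ρ)/2 := by
        calc (((e i - c i).natAbs : ℕ) : ℝ) * ρ = ρ * |((e i - c i : ℤ) : ℝ)| := by
              rw [Nat.cast_natAbs]; push_cast; ring
        _ = |w i - g i| := by rw [h2, abs_mul, abs_of_pos hρ]
        _ ≤ (n * ρ + ρ)/2 := h1
      have h4 : 2 * ((e i - c i).natAbs : ℝ) ≤ (n : ℝ) + 1 := by
        nlinarith
      have h5 : 2 * (e i - c i).natAbs ≤ n + 1 := by exact_mod_cast h4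
      have h6 : (e i - c i).natAbs ≤ n - 1 := by omega
      calc |w i - g i| = (((e i - c i).natAbs : ℕ) : ℝ) * ρ := by
            rw [h2, abs_mul, abs_of_pos hρ, Nat.cast_natAbs]; push_cast; ring
      _ ≤ ((n - 1 : ℕ) : ℝ) * ρ := by
            have : (((e i - c i).natAbs : ℕ) : ℝ) ≤ ((n - 1 : ℕ) : ℝ) := by exact_mod_cast h6
            nlinarith
    have hym : ∀ i, |y i - m i| ≤ n * ρ / 2 := by
      intro i
      have : y i - m i = (y i - z i) / 2 := by simp [hm_def]; ring
      rw [this, abs_div, abs_of_pos (by norm_num : (0:ℝ) < 2)]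
      have := hbd i; linarith
    have hzm : ∀ i, |z i - m i| ≤ n * ρ / 2 := by
      intro i
      have : z i - m i = (z i - y i) / 2 := by simp [hm_def]; ring
      rw [this, abs_div, abs_of_pos (by norm_num : (0:ℝ) < 2)]
      have := hbd i; rw [abs_sub_comm] at this; linarith
    have ch1 := IH (n - 1) (by omega) y hy g hgS (hbound y a ha hym)
    have ch2 := IH (n - 1) (by omega) z hz g hgS (hbound z b hb hzm)
    obtain ⟨N2, c2, hc20, hc2N, hc2d, hc2m⟩ := ch2
    have ch2' : ChainConn ρ ({x : Fin d → ℝ | infDist x K ≤ α} ∩ grid ρ d) g z := by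
      refine ⟨N2, fun j => c2 (N2 - j), by simp [hc2N], by simp [hc20], ?_, ?_⟩
      · intro j hj
        have h1 : N2 - j = (N2 - (j+1)) + 1 := by omega
        show dist (c2 (N2 - (j+1))) (c2 (N2 - j)) = ρ
        rw [dist_comm, h1]
        exact hc2d (N2 - (j+1)) (by omega)
      · intro j hj; exact hc2m (N2 - j) (by omega)
    exact chain_concat ch1 ch2'

theorem stmt7 {d : ℕ} (ρ α : ℝ) (hρ : 0 < ρ) (hα : ρ / 2 ≤ α)
    (K : Set (Fin d → ℝ)) (hKne : K.Nonempty) (hKcv : Convex ℝ K)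
    (hKcp : IsCompact K) :
    ({x : Fin d → ℝ | infDist x K ≤ α} ∩ grid ρ d).Nonempty ∧
    ChainConnected ρ ({x : Fin d → ℝ | infDist x K ≤ α} ∩ grid ρ d) := by
  have hα0 : (0:ℝ) ≤ α := by linarith
  constructor
  · obtain ⟨k0, hk0⟩ := hKne
    refine ⟨fun i => ρ * round (k0 i / ρ), ?_, fun i => ⟨round (k0 i / ρ), rfl⟩⟩
    refine le_trans (infDist_le_dist_of_mem hk0) ?_
    refine (dist_pi_le_iff hα0).2 fun i => ?_
    rw [Real.dist_eq]
    have h1 : |k0 i / ρ - round (k0 i / ρ)| ≤ 1/2 := abs_sub_round _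
    have h2 : ρ * round (k0 i / ρ) - k0 i = -(ρ * (k0 i / ρ - round (k0 i / ρ))) := by
      field_simp
      ring
    rw [h2, abs_neg, abs_mul, abs_of_pos hρ]
    nlinarith
  · intro y hy z hz
    obtain ⟨n, hn⟩ : ∃ n : ℕ, ∀ i, |y i - z i| ≤ n * ρ := by
      refine ⟨⌈dist y z / ρ⌉₊, fun i => ?_⟩
      have h1 : |y i - z i| ≤ dist y z := by
        rw [← Real.dist_eq]; exact dist_le_pi_dist y z i
      have h2 : dist y z / ρ ≤ ⌈dist y z / ρ⌉₊ := Nat.le_ceil _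
      calc |y i - z i| ≤ dist y z := h1
      _ = dist y z / ρ * ρ := by field_simp
      _ ≤ ⌈dist y z / ρ⌉₊ * ρ := by nlinarith [Nat.le_ceil (dist y z / ρ)]
    exact key ρ α hρ hα K hKne hKcv hKcp n y hy z hz hn
end

section
/- Let F : ℝ^d → (convex compact subsets of ℝ^d) be L-Lipschitz w.r.t. the sup-norm Hausdorff distance, h > 0 with Lh < 1, Φ(x) := x + hF(x), ρ > 0, α* := (1+Lh)ρ/2, and Φ_{α*}(x) := B_{α*}(Φ(x))_∞. If M ⊂ Δ_ρ = ρℤ^d is chain-connected, then Φ_{α*}(M) ∩ Δ_ρ := (⋃_{m∈M} Φ_{α*}(m)) ∩ Δ_ρ is chain-connected. -/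
open Metric Set Pointwise

/-!
Round points of `ℝ^d` coordinatewise to the grid `ρℤ^d`. Rounding is monotone in each
coordinate and commutes with translation by `ρ`, so points at sup-distance at most `ρ` round to
equal or adjacent grid points; sampling a segment with step at most `ρ` therefore rounds to a
chain, and the rounding of a convex set is chain-connected.

With `α* = ρ/2 + Lhρ/2`, the rounding of the convex set `K m`, the closed `Lhρ/2`-thickening of
`Φ(m) = m + hF(m)`, lies in `Φ_{α*}(m) ∩ Δ_ρ`. For adjacent `m, m' ∈ M` the Lipschitz bound gives
`f ∈ F(m)`, `f' ∈ F(m')` with `|f - f'| ≤ Lρ`; then `m + h(f + f')/2 ∈ K m` and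
`m' + h(f + f')/2 ∈ K m'` are at distance `ρ`, which links the roundings of `K m` and `K m'`.
Finally a grid point of `Φ_{α*}(m)` is within `α*` of some `c ∈ Φ(m)`, and so is the rounding of
`c` since `α* ≥ ρ/2`; the grid points of that sup-norm ball around `c` are chain-connected.
-/

open Relation

def GridStep (ρ : ℝ) {d : ℕ} (S : Set (Fin d → ℝ)) (x y : Fin d → ℝ) : Prop :=
  x ∈ S ∧ y ∈ S ∧ dist x y = ρ

lemma Relation.reflTransGen_of_forall_succ {α : Type*} {r : α → α → Prop} (c : ℕ → α) {N : ℕ}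
    (h : ∀ n < N, ReflTransGen r (c n) (c (n + 1))) : ReflTransGen r (c 0) (c N) :=
  ReflTransGen.lift' c (fun _ _ => id) _ _
    (reflTransGen_of_succ_of_le (fun i j => ReflTransGen r (c i) (c j)) (fun n hn => h n hn.2)
      N.zero_le)

section GridStep

variable {ρ : ℝ} {d : ℕ} {S T : Set (Fin d → ℝ)} {x y : Fin d → ℝ}

lemma GridStep.symm (h : GridStep ρ S x y) : GridStep ρ S y x :=
  ⟨h.2.1, h.1, dist_comm x y ▸ h.2.2⟩

lemma GridStep.mono (hST : S ⊆ T) (h : GridStep ρ S x y) : GridStep ρ T x y :=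
  ⟨hST h.1, hST h.2.1, h.2.2⟩

lemma reflTransGen_gridStep_symm (h : ReflTransGen (GridStep ρ S) x y) :
    ReflTransGen (GridStep ρ S) y x := by
  induction h with
  | refl => rfl
  | tail _ hstep ih => exact ih.head hstep.symm

lemma chainConn_iff : ChainConn ρ S x y ↔ x ∈ S ∧ ReflTransGen (GridStep ρ S) x y := by
  constructor
  · rintro ⟨N, c, rfl, rfl, hdist, hmem⟩
    refine ⟨hmem 0 N.zero_le, reflTransGen_of_forall_succ c fun n hn => .single ?_⟩
    exact ⟨hmem n hn.le, hmem (n + 1) hn, dist_comm (c n) _ ▸ hdist n hn⟩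
  · rintro ⟨hx, h⟩
    induction h with
    | refl =>
      exact ⟨0, fun _ => x, rfl, rfl, fun _ hn => absurd hn (Nat.not_lt_zero _), fun _ _ => hx⟩
    | @tail b e _ hbe ih =>
      obtain ⟨N, c, hc0, hcN, hdist, hmem⟩ := ih
      refine ⟨N + 1, fun n => if n ≤ N then c n else e, by simpa using hc0, by simp, ?_, ?_⟩
      · intro n hn
        rcases (Nat.lt_succ_iff.1 hn).lt_or_eq with hn | rfl
        · simpa [hn.le, Nat.succ_le_of_lt hn] using hdist n hn
        · simpa [hcN, dist_comm] using hbe.2.2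
      · intro n hn
        by_cases hnN : n ≤ N
        · simpa [hnN] using hmem n hnN
        · simpa [hnN] using hbe.2.1

end GridStep

noncomputable def gridRound (ρ : ℝ) {d : ℕ} (x : Fin d → ℝ) : Fin d → ℝ :=
  fun i => ρ * round (x i / ρ)

section GridRound

variable {ρ : ℝ} {d : ℕ} {S : Set (Fin d → ℝ)} {x y : Fin d → ℝ}

lemma gridRound_mem_grid (x : Fin d → ℝ) : gridRound ρ x ∈ grid ρ d :=
  fun i => ⟨round (x i / ρ), rfl⟩

lemma gridRound_eq_self (hρ : ρ ≠ 0) {g : Fin d → ℝ} (hg : g ∈ grid ρ d) : gridRound ρ g = g := by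
  funext i
  obtain ⟨k, hk⟩ := hg i
  simp [gridRound, hk, hρ]

lemma dist_gridRound_le (hρ : 0 < ρ) (x : Fin d → ℝ) : dist (gridRound ρ x) x ≤ ρ / 2 := by
  refine (dist_pi_le_iff (by positivity)).2 fun i => ?_
  calc dist (gridRound ρ x i) (x i) = ρ * |x i / ρ - round (x i / ρ)| := by
        rw [Real.dist_eq, gridRound, abs_sub_comm, ← abs_of_pos hρ, ← abs_mul, abs_of_pos hρ,
          mul_sub, mul_div_cancel₀ _ hρ.ne']
    _ ≤ ρ * (1 / 2) := by gcongr; exact abs_sub_round _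
    _ = ρ / 2 := by ring

lemma monotone_mul_round_div (hρ : 0 < ρ) : Monotone fun t : ℝ => ρ * round (t / ρ) := by
  intro a b hab
  have : round (a / ρ) ≤ round (b / ρ) := by
    rw [round_eq, round_eq]
    exact Int.floor_mono (by gcongr)
  dsimp only
  gcongr

lemma dist_gridRound_le_of_dist_le (hρ : 0 < ρ) (h : dist x y ≤ ρ) :
    dist (gridRound ρ x) (gridRound ρ y) ≤ ρ := by
  have key {a b : ℝ} (hab : a ≤ b + ρ) : ρ * round (a / ρ) ≤ ρ * round (b / ρ) + ρ := by
    have := monotone_mul_round_div hρ hab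
    dsimp only at this
    rwa [add_div, div_self hρ.ne', round_add_one, Int.cast_add, Int.cast_one, mul_add,
      mul_one] at this
  refine (dist_pi_le_iff hρ.le).2 fun i => ?_
  have hi := (dist_le_pi_dist x y i).trans h
  rw [Real.dist_eq, abs_sub_le_iff] at hi ⊢
  exact ⟨sub_le_iff_le_add'.2 (key (by linarith)), sub_le_iff_le_add'.2 (key (by linarith))⟩

lemma eq_or_dist_eq_of_dist_le {g g' : Fin d → ℝ} (hg : g ∈ grid ρ d) (hg' : g' ∈ grid ρ d)
    (h : dist g g' ≤ ρ) : g = g' ∨ dist g g' = ρ := by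
  refine or_iff_not_imp_left.2 fun hne => h.antisymm ?_
  obtain ⟨i, hi⟩ := Function.ne_iff.1 hne
  obtain ⟨a, ha⟩ := hg i
  obtain ⟨b, hb⟩ := hg' i
  have hab : (1 : ℝ) ≤ |((a - b : ℤ) : ℝ)| := by
    exact_mod_cast Int.one_le_abs (sub_ne_zero.2 fun hab => hi (by rw [ha, hb, hab]))
  calc ρ ≤ |ρ| * |((a - b : ℤ) : ℝ)| :=
        (le_abs_self ρ).trans (le_mul_of_one_le_right (abs_nonneg _) hab)
    _ = dist (g i) (g' i) := by rw [Real.dist_eq, ha, hb, ← abs_mul]; push_cast; ring_nf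
    _ ≤ dist g g' := dist_le_pi_dist g g' i

lemma reflGen_gridRound (hρ : 0 < ρ) (hx : gridRound ρ x ∈ S) (hy : gridRound ρ y ∈ S)
    (h : dist x y ≤ ρ) : ReflGen (GridStep ρ S) (gridRound ρ x) (gridRound ρ y) := by
  rcases eq_or_dist_eq_of_dist_le (gridRound_mem_grid x) (gridRound_mem_grid y)
      (dist_gridRound_le_of_dist_le hρ h) with heq | hdist
  · exact heq ▸ .refl
  · exact .single ⟨hx, hy, hdist⟩

end GridRound

section Segment

variable {ρ : ℝ} {d : ℕ} {S : Set (Fin d → ℝ)}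

lemma reflTransGen_gridRound_of_segment_subset (hρ : 0 < ρ) {a b : Fin d → ℝ}
    (hS : gridRound ρ '' segment ℝ a b ⊆ S) :
    ReflTransGen (GridStep ρ S) (gridRound ρ a) (gridRound ρ b) := by
  set N := ⌈dist a b / ρ⌉₊ + 1
  have hNpos : (0 : ℝ) < N := by positivity
  have hN : dist a b ≤ ρ * N := by
    have := (div_le_iff₀ hρ).1 (Nat.le_ceil (dist a b / ρ))
    push_cast [N]
    linarith
  set p : ℕ → Fin d → ℝ := fun n => AffineMap.lineMap a b ((n : ℝ) / N)
  have hpS : ∀ n ≤ N, gridRound ρ (p n) ∈ S := fun n hn =>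
    hS (mem_image_of_mem _ (segment_eq_image_lineMap ℝ a b ▸
      mem_image_of_mem _ ⟨by positivity, div_le_one_of_le₀ (by exact_mod_cast hn) hNpos.le⟩))
  have hstep (n : ℕ) : dist (p n) (p (n + 1)) ≤ ρ :=
    calc dist (p n) (p (n + 1)) = dist a b / N := by
          simp only [p, dist_lineMap_lineMap, Real.dist_eq]
          rw [show (n : ℝ) / N - ((n + 1 : ℕ) : ℝ) / N = -(1 / N) by push_cast; ring, abs_neg,
            abs_of_pos (by positivity), one_div_mul_eq_div]
      _ ≤ ρ := (div_le_iff₀ hNpos).2 hN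
  simpa [p] using reflTransGen_of_forall_succ (fun n => gridRound ρ (p n)) (N := N)
    fun n hn => (reflGen_gridRound hρ (hpS n hn.le) (hpS (n + 1) hn) (hstep n)).to_reflTransGen

lemma reflTransGen_gridRound_of_convex (hρ : 0 < ρ) {K : Set (Fin d → ℝ)} (hK : Convex ℝ K)
    (hKS : gridRound ρ '' K ⊆ S) {a b : Fin d → ℝ} (ha : a ∈ K) (hb : b ∈ K) :
    ReflTransGen (GridStep ρ S) (gridRound ρ a) (gridRound ρ b) :=
  reflTransGen_gridRound_of_segment_subset hρ ((image_mono (hK.segment_subset ha hb)).trans hKS)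

lemma gridRound_mem_closedBall_of_mem_segment (hρ : 0 < ρ) {g g' c x : Fin d → ℝ} {r : ℝ}
    (hg : g ∈ grid ρ d) (hg' : g' ∈ grid ρ d) (hgc : g ∈ closedBall c r)
    (hg'c : g' ∈ closedBall c r) (hx : x ∈ segment ℝ g g') : gridRound ρ x ∈ closedBall c r := by
  have hr : 0 ≤ r := dist_nonneg.trans hgc
  simp only [closedBall_pi _ hr, Real.closedBall_eq_Icc, mem_univ_pi] at hgc hg'c ⊢
  intro i
  obtain ⟨s, t, hs, ht, hst, rfl⟩ := hx
  have hxi : s * g i + t * g' i ∈ uIcc (g i) (g' i) :=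
    segment_eq_uIcc (g i) (g' i) ▸ ⟨s, t, hs, ht, hst, rfl⟩
  have hround := (monotone_mul_round_div hρ).image_uIcc_subset (mem_image_of_mem _ hxi)
  have hgi : ρ * round (g i / ρ) = g i := congrFun (gridRound_eq_self hρ.ne' hg) i
  have hg'i : ρ * round (g' i / ρ) = g' i := congrFun (gridRound_eq_self hρ.ne' hg') i
  rw [hgi, hg'i] at hround
  exact uIcc_subset_Icc (hgc i) (hg'c i) hround

lemma reflTransGen_closedBall_inter_grid (hρ : 0 < ρ) {g g' c : Fin d → ℝ} {r : ℝ}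
    (hg : g ∈ grid ρ d) (hg' : g' ∈ grid ρ d) (hgc : g ∈ closedBall c r)
    (hg'c : g' ∈ closedBall c r) : ReflTransGen (GridStep ρ (closedBall c r ∩ grid ρ d)) g g' := by
  rw [← gridRound_eq_self hρ.ne' hg, ← gridRound_eq_self hρ.ne' hg']
  refine reflTransGen_gridRound_of_segment_subset hρ ?_
  rintro _ ⟨x, hx, rfl⟩
  exact ⟨gridRound_mem_closedBall_of_mem_segment hρ hg hg' hgc hg'c hx, gridRound_mem_grid x⟩

end Segment

section Cover

variable {ρ : ℝ} {d : ℕ}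

theorem chainConnected_of_convex_cover (hρ : 0 < ρ) {M S : Set (Fin d → ℝ)}
    (K : (Fin d → ℝ) → Set (Fin d → ℝ)) (hM : ChainConnected ρ M)
    (hK : ∀ m ∈ M, Convex ℝ (K m)) (hKS : ∀ m ∈ M, gridRound ρ '' K m ⊆ S)
    (hadj : ∀ m ∈ M, ∀ m' ∈ M, dist m m' = ρ → ∃ u ∈ K m, ∃ u' ∈ K m', dist u u' ≤ ρ)
    (hS : ∀ p ∈ S, ∃ m ∈ M, ∃ u ∈ K m, ReflTransGen (GridStep ρ S) p (gridRound ρ u)) :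
    ChainConnected ρ S := by
  have hlink : ∀ {m m'}, ReflTransGen (GridStep ρ M) m m' → m ∈ M → ∀ u ∈ K m, ∀ u' ∈ K m',
      ReflTransGen (GridStep ρ S) (gridRound ρ u) (gridRound ρ u') := by
    intro m m' hmm' hm
    induction hmm' with
    | refl =>
      exact fun u hu u' hu' => reflTransGen_gridRound_of_convex hρ (hK m hm) (hKS m hm) hu hu'
    | @tail b c _ hbc ih =>
      intro u hu u' hu'
      obtain ⟨w, hw, w', hw', hww'⟩ := hadj b hbc.1 c hbc.2.1 hbc.2.2
      exact (ih u hu w hw).trans <| (reflGen_gridRound hρ (hKS b hbc.1 (mem_image_of_mem _ hw))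
        (hKS c hbc.2.1 (mem_image_of_mem _ hw')) hww').to_reflTransGen.trans <|
        reflTransGen_gridRound_of_convex hρ (hK c hbc.2.1) (hKS c hbc.2.1) hw' hu'
  intro p hp q hq
  obtain ⟨m, hm, u, hu, hpu⟩ := hS p hp
  obtain ⟨m', hm', u', hu', hqu'⟩ := hS q hq
  have hmm' := (chainConn_iff.1 (hM m hm m' hm')).2
  exact chainConn_iff.2
    ⟨hp, hpu.trans <| (hlink hmm' hm u hu u' hu').trans (reflTransGen_gridStep_symm hqu')⟩

lemma infDist_le_of_mem_cthickening {α : Type*} [PseudoMetricSpace α] {s : Set α} {x : α}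
    {δ : ℝ} (hδ : 0 ≤ δ) (hx : x ∈ cthickening δ s) : infDist x s ≤ δ := by
  rw [infDist, ← ENNReal.toReal_ofReal hδ]
  exact ENNReal.toReal_mono ENNReal.ofReal_ne_top hx

lemma infDist_gridRound_le (hρ : 0 < ρ) {C : Set (Fin d → ℝ)} {δ : ℝ} (hδ : 0 ≤ δ)
    {x : Fin d → ℝ} (hx : x ∈ cthickening δ C) : infDist (gridRound ρ x) C ≤ δ + ρ / 2 :=
  infDist_le_infDist_add_dist.trans
    (add_le_add (infDist_le_of_mem_cthickening hδ hx) (dist_gridRound_le hρ x))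

lemma exists_reflTransGen_gridRound_of_infDist_le (hρ : 0 < ρ) {C : Set (Fin d → ℝ)}
    (hC : IsCompact C) (hne : C.Nonempty) {α : ℝ} (hα : ρ / 2 ≤ α) {p : Fin d → ℝ}
    (hp : p ∈ grid ρ d) (hpC : infDist p C ≤ α) :
    ∃ c ∈ C, ReflTransGen (GridStep ρ ({q | infDist q C ≤ α} ∩ grid ρ d)) p (gridRound ρ c) := by
  obtain ⟨c, hc, hpc⟩ := hC.exists_infDist_eq_dist hne p
  have hball : closedBall c α ∩ grid ρ d ⊆ {q | infDist q C ≤ α} ∩ grid ρ d :=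
    fun q hq => ⟨(infDist_le_dist_of_mem hc).trans hq.1, hq.2⟩
  exact ⟨c, hc, ReflTransGen.mono (fun _ _ => GridStep.mono hball) _ _ <|
    reflTransGen_closedBall_inter_grid hρ hp (gridRound_mem_grid c)
      (show dist p c ≤ α from hpc ▸ hpC) ((dist_gridRound_le hρ c).trans hα)⟩

end Cover

lemma exists_dist_le_hausdorffDist {α : Type*} [PseudoMetricSpace α] {s t : Set α} {x : α}
    (hx : x ∈ s) (hs : Bornology.IsBounded s) (ht : IsCompact t) (htne : t.Nonempty) :
    ∃ y ∈ t, dist x y ≤ hausdorffDist s t := by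
  obtain ⟨y, hy, hxy⟩ := ht.exists_infDist_eq_dist htne x
  exact ⟨y, hy, hxy ▸ infDist_le_hausdorffDist_of_mem hx
    (hausdorffEDist_ne_top_of_nonempty_of_bounded ⟨x, hx⟩ htne hs ht.isBounded)⟩

lemma exists_mem_cthickening_singleton_add_smul {E : Type*} [NormedAddCommGroup E]
    [NormedSpace ℝ E] {h : ℝ} (hh : 0 ≤ h) {A B : Set E} {a b : E} (ha : a ∈ A) (hb : b ∈ B)
    (m m' : E) : ∃ u ∈ cthickening (h * dist a b / 2) ({m} + h • A),
      ∃ u' ∈ cthickening (h * dist a b / 2) ({m'} + h • B), dist u u' = dist m m' := by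
  have hmid {x : E} (hx : dist (midpoint ℝ a b) x = 2⁻¹ * dist a b) (n : E) :
      dist (n + h • midpoint ℝ a b) (n + h • x) = h * dist a b / 2 := by
    rw [dist_add_left, dist_smul₀, hx, Real.norm_of_nonneg hh]
    ring
  refine ⟨m + h • midpoint ℝ a b, ?_, m' + h • midpoint ℝ a b, ?_, dist_add_right _ _ _⟩
  · refine mem_cthickening_of_dist_le _ (m + h • a) _ _ (add_mem_add rfl (smul_mem_smul_set ha)) ?_
    exact (hmid (by simp [dist_midpoint_left]) m).le
  · refine mem_cthickening_of_dist_le _ (m' + h • b) _ _ (add_mem_add rfl (smul_mem_smul_set hb)) ?_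
    exact (hmid (by simp [dist_midpoint_right]) m').le

theorem stmt8_general {d : ℕ} (F : (Fin d → ℝ) → Set (Fin d → ℝ))
    (hne : ∀ x, (F x).Nonempty) (hcv : ∀ x, Convex ℝ (F x))
    (hcp : ∀ x, IsCompact (F x))
    (L h ρ : ℝ) (hh : 0 < h) (hρ : 0 < ρ)
    (hlip : ∀ x y, hausdorffDist (F x) (F y) ≤ L * dist x y)
    (M : Set (Fin d → ℝ))
    (hMconn : ChainConnected ρ M) :
    ChainConnected ρ
      ((⋃ m ∈ M, {y : Fin d → ℝ |
          infDist y ({m} + h • F m) ≤ (1 + L * h) * ρ / 2}) ∩ grid ρ d) := by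
  obtain hL | hL := lt_or_ge L 0
  · -- then the Lipschitz bound forces `Fin d → ℝ` to be a single point
    intro x hx y hy
    obtain rfl : x = y :=
      dist_le_zero.1 <| nonpos_of_mul_nonneg_right (hausdorffDist_nonneg.trans (hlip x y)) hL
    exact chainConn_iff.2 ⟨hx, .refl⟩
  have hδ : 0 ≤ L * h * ρ / 2 := by positivity
  refine chainConnected_of_convex_cover hρ (fun m => cthickening (L * h * ρ / 2) ({m} + h • F m))
    hMconn ?_ ?_ ?_ ?_
  · exact fun m _ => ((convex_singleton m).add ((hcv m).smul h)).cthickening _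
  · rintro m hm _ ⟨x, hx, rfl⟩
    refine ⟨mem_biUnion hm ?_, gridRound_mem_grid x⟩
    exact (infDist_gridRound_le hρ hδ hx).trans_eq (by ring)
  · intro m _ m' _ hmm'
    obtain ⟨f', hf', hff'⟩ := exists_dist_le_hausdorffDist (hne m).some_mem (hcp m).isBounded
      (hcp m') (hne m')
    obtain ⟨u, hu, u', hu', huu'⟩ :=
      exists_mem_cthickening_singleton_add_smul hh.le (hne m).some_mem hf' m m'
    have hr : h * dist (hne m).some f' / 2 ≤ L * h * ρ / 2 := by
      have := mul_le_mul_of_nonneg_left (hff'.trans ((hlip m m').trans_eq (by rw [hmm']))) hh.le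
      linarith
    exact ⟨u, cthickening_mono hr _ hu, u', cthickening_mono hr _ hu', (huu'.trans hmm').le⟩
  · rintro p ⟨hpM, hp⟩
    obtain ⟨m, hm, hpm⟩ := mem_iUnion₂.1 hpM
    obtain ⟨c, hc, hpc⟩ := exists_reflTransGen_gridRound_of_infDist_le hρ
      (isCompact_singleton.add ((hcp m).smul h)) ((singleton_nonempty m).add (hne m).smul_set)
      (by linarith) hp hpm
    refine ⟨m, hm, c, self_subset_cthickening _ hc,
      ReflTransGen.mono (fun _ _ => GridStep.mono ?_) _ _ hpc⟩
    exact fun q hq => ⟨mem_biUnion hm hq.1, hq.2⟩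

theorem stmt8 {d : ℕ} (F : (Fin d → ℝ) → Set (Fin d → ℝ))
    (hne : ∀ x, (F x).Nonempty) (hcv : ∀ x, Convex ℝ (F x))
    (hcp : ∀ x, IsCompact (F x))
    (L h ρ : ℝ) (hh : 0 < h) (hLh : L * h < 1) (hρ : 0 < ρ)
    (hlip : ∀ x y, hausdorffDist (F x) (F y) ≤ L * dist x y)
    (M : Set (Fin d → ℝ)) (hMgrid : M ⊆ grid ρ d)
    (hMconn : ChainConnected ρ M) :
    ChainConnected ρ
      ((⋃ m ∈ M, {y : Fin d → ℝ |
          infDist y ({m} + h • F m) ≤ (1 + L * h) * ρ / 2}) ∩ grid ρ d) :=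
  stmt8_general F hne hcv hcp L h ρ hh hρ hlip M hMconn
end

section
/- Let ρ > 0, Δ_ρ = ρℤ^d, let M ⊂ Δ_ρ be a finite (compact) nonempty set of grid points, and let γ* satisfy ρ/2 < γ* < ρ. Define M̂ := B_{γ*}(M)_∞ = {x ∈ ℝ^d : dist∞(x,M) ≤ γ*}. Then M̂ is compact and dist_H(∂M̂, ∂⁰_ρ M)_∞ ≤ γ*, where ∂⁰_ρ M := {a ∈ M : ∃ x ∈ Δ_ρ \ M with |x − a|∞ = ρ} is the discrete boundary of M. -/
open Metric Set

/-- The discrete boundary of a set of grid points. -/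
def discreteBoundary (ρ : ℝ) {d : ℕ} (M : Set (Fin d → ℝ)) : Set (Fin d → ℝ) :=
  {a ∈ M | ∃ x ∈ grid ρ d \ M, dist x a = ρ}

/-!
Every boundary point `y` of `M̂` is at distance exactly `γ` from `M`, and a nearest point
`a ∈ M` is a discrete boundary point: rounding `y` to the grid gives a grid point within
`ρ/2 < γ` of `y`, hence outside `M`, and within `γ + ρ/2 < 2ρ` of `a`, hence a grid neighbour
of `a`. Conversely, if `a ∈ ∂⁰M` has the grid neighbour `x ∉ M`, then `a` is a nearest point
of `M` to `x`, so the distance to `M` grows linearly along the segment from `a` to `x`, and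
the point of the segment at distance `γ` from `a` lies on `∂M̂`.
-/

theorem setOf_infDist_le_eq_cthickening {α : Type*} [PseudoMetricSpace α] {s : Set α}
    (hs : s.Nonempty) {δ : ℝ} (hδ : 0 ≤ δ) :
    {x | infDist x s ≤ δ} = cthickening δ s := by
  ext x
  rw [mem_cthickening_iff, mem_ofPred_eq, infDist,
    ENNReal.le_ofReal_iff_toReal_le (infEDist_ne_top hs) hδ]

section NearestPoint

variable {E : Type*} [NormedAddCommGroup E] [NormedSpace ℝ E]

theorem infDist_lineMap_of_forall_dist_le {M : Set E} {a x : E} (ha : a ∈ M)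
    (hx : ∀ m ∈ M, dist a x ≤ dist m x) {t : ℝ} (ht₀ : 0 ≤ t) (ht₁ : t ≤ 1) :
    infDist (AffineMap.lineMap a x t) M = t * dist a x := by
  have hleft := dist_lineMap_left a x t
  have hright := dist_lineMap_right a x t
  rw [Real.norm_of_nonneg ht₀] at hleft
  rw [Real.norm_of_nonneg (by linarith)] at hright
  refine le_antisymm (hleft ▸ infDist_le_dist_of_mem ha) ?_
  refine (le_infDist ⟨a, ha⟩).2 fun m hm => ?_
  have := dist_triangle m (AffineMap.lineMap a x t) x
  linarith [hx m hm, dist_comm m (AffineMap.lineMap a x t)]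

theorem lineMap_mem_frontier_setOf_infDist_le {M : Set E} {a x : E} (ha : a ∈ M)
    (hx : ∀ m ∈ M, dist a x ≤ dist m x) {γ : ℝ} (hγ₀ : 0 ≤ γ) (hγ : γ < dist a x) :
    AffineMap.lineMap a x (γ / dist a x) ∈ frontier {y | infDist y M ≤ γ} := by
  have hr : 0 < dist a x := hγ₀.trans_lt hγ
  have ht₀ : 0 ≤ γ / dist a x := div_nonneg hγ₀ hr.le
  have ht₁ : γ / dist a x < 1 := (div_lt_one hr).2 hγ
  have hinfDist {t : ℝ} (ht₀ : 0 ≤ t) (ht₁ : t ≤ 1) :=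
    infDist_lineMap_of_forall_dist_le ha hx ht₀ ht₁
  rw [frontier_eq_closure_inter_closure]
  refine ⟨subset_closure ?_, ?_⟩
  · rw [mem_ofPred_eq, hinfDist ht₀ ht₁.le, div_mul_cancel₀ _ hr.ne']
  · refine mem_closure_of_tendsto ((AffineMap.lineMap_continuous.tendsto _).mono_left
      (nhdsWithin_le_nhds (s := Ioi (γ / dist a x)))) ?_
    filter_upwards [Ioo_mem_nhdsGT ht₁] with t ⟨htl, htr⟩
    rw [mem_compl_iff, mem_ofPred_eq, hinfDist (ht₀.trans htl.le) htr.le, not_le]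
    exact (div_lt_iff₀ hr).1 htl

end NearestPoint

section Grid

variable {ρ : ℝ} {d : ℕ} {x a : Fin d → ℝ}

theorem exists_nat_dist_apply_eq_of_mem_grid (hρ : 0 ≤ ρ) (hx : x ∈ grid ρ d)
    (ha : a ∈ grid ρ d) (i : Fin d) : ∃ n : ℕ, dist (x i) (a i) = ρ * n := by
  obtain ⟨k, hk⟩ := hx i
  obtain ⟨l, hl⟩ := ha i
  refine ⟨(k - l).natAbs, ?_⟩
  rw [Real.dist_eq, hk, hl, ← mul_sub, abs_mul, abs_of_nonneg hρ, Nat.cast_natAbs,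
    Int.cast_abs, Int.cast_sub]

theorem le_dist_of_mem_grid (hρ : 0 ≤ ρ) (hx : x ∈ grid ρ d) (ha : a ∈ grid ρ d)
    (hne : x ≠ a) : ρ ≤ dist x a := by
  obtain ⟨i, hi⟩ := Function.ne_iff.1 hne
  obtain ⟨n, hn⟩ := exists_nat_dist_apply_eq_of_mem_grid hρ hx ha i
  have hn₀ : n ≠ 0 := by
    rintro rfl
    simp [dist_eq_zero, hi] at hn
  calc ρ ≤ ρ * n :=
        le_mul_of_one_le_right hρ (Nat.one_le_cast.2 (Nat.one_le_iff_ne_zero.2 hn₀))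
    _ = dist (x i) (a i) := hn.symm
    _ ≤ dist x a := dist_le_pi_dist x a i

theorem dist_eq_of_mem_grid_of_dist_lt (hρ : 0 < ρ) (hx : x ∈ grid ρ d) (ha : a ∈ grid ρ d)
    (hne : x ≠ a) (hlt : dist x a < 2 * ρ) : dist x a = ρ := by
  refine le_antisymm ((dist_pi_le_iff hρ.le).2 fun i => ?_) (le_dist_of_mem_grid hρ.le hx ha hne)
  obtain ⟨n, hn⟩ := exists_nat_dist_apply_eq_of_mem_grid hρ.le hx ha i
  have hn₂ : (n : ℝ) < 2 := lt_of_mul_lt_mul_left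
    (hn ▸ (dist_le_pi_dist x a i).trans_lt (mul_comm 2 ρ ▸ hlt)) hρ.le
  have hn₁ : (n : ℝ) ≤ 1 := by exact_mod_cast Nat.lt_succ_iff.1 (by exact_mod_cast hn₂)
  rw [hn]
  exact mul_le_of_le_one_right hρ.le hn₁

theorem exists_mem_grid_dist_le (hρ : 0 < ρ) (y : Fin d → ℝ) :
    ∃ g ∈ grid ρ d, dist y g ≤ ρ / 2 := by
  refine ⟨fun i => ρ * round (y i / ρ), fun i => ⟨round (y i / ρ), rfl⟩,
    (dist_pi_le_iff (by positivity)).2 fun i => ?_⟩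
  have hround : |y i / ρ - round (y i / ρ)| ≤ 1 / 2 := abs_sub_round _
  have hsub : y i - ρ * round (y i / ρ) = ρ * (y i / ρ - round (y i / ρ)) := by
    field_simp
  rw [Real.dist_eq, hsub, abs_mul, abs_of_pos hρ]
  linarith [mul_le_mul_of_nonneg_left hround hρ.le]

end Grid

section DiscreteBoundary

variable {ρ γ : ℝ} {d : ℕ} {M : Set (Fin d → ℝ)}

theorem infDist_discreteBoundary_le (hρ : 0 < ρ) (hγ₁ : ρ / 2 < γ) (hγ₂ : γ < ρ)
    (hMfin : M.Finite) (hMne : M.Nonempty) (hMgrid : M ⊆ grid ρ d) {y : Fin d → ℝ}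
    (hy : infDist y M = γ) : infDist y (discreteBoundary ρ M) ≤ γ := by
  obtain ⟨a, haM, hay⟩ := hMfin.isCompact.exists_infDist_eq_dist hMne y
  obtain ⟨g, hg, hyg⟩ := exists_mem_grid_dist_le hρ y
  have hgM : g ∉ M := fun hgM => by
    linarith [hy ▸ infDist_le_dist_of_mem (x := y) hgM]
  have hag : dist a g = ρ := by
    refine dist_eq_of_mem_grid_of_dist_lt hρ (hMgrid haM) hg
      (ne_of_mem_of_not_mem haM hgM) ?_
    linarith [dist_triangle_left a g y]
  have haB : a ∈ discreteBoundary ρ M := ⟨haM, g, ⟨hg, hgM⟩, dist_comm g a ▸ hag⟩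
  exact (infDist_le_dist_of_mem haB).trans (hay ▸ hy).le

theorem infDist_frontier_le_of_mem_discreteBoundary (hρ : 0 < ρ) (hγ₀ : 0 ≤ γ)
    (hγ : γ < ρ) (hMgrid : M ⊆ grid ρ d) {a : Fin d → ℝ} (ha : a ∈ discreteBoundary ρ M) :
    infDist a (frontier {y | infDist y M ≤ γ}) ≤ γ := by
  obtain ⟨haM, x, ⟨hxg, hxM⟩, hxa⟩ := ha
  have hax : dist a x = ρ := dist_comm x a ▸ hxa
  have hnearest : ∀ m ∈ M, dist a x ≤ dist m x := fun m hm =>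
    hax ▸ le_dist_of_mem_grid hρ.le (hMgrid hm) hxg (ne_of_mem_of_not_mem hm hxM)
  have hz := lineMap_mem_frontier_setOf_infDist_le haM hnearest hγ₀ (hax ▸ hγ)
  refine (infDist_le_dist_of_mem hz).trans_eq ?_
  rw [dist_comm, dist_lineMap_left, hax, Real.norm_of_nonneg (div_nonneg hγ₀ hρ.le),
    div_mul_cancel₀ _ hρ.ne']

end DiscreteBoundary

theorem stmt9 {d : ℕ} (ρ γ : ℝ) (hρ : 0 < ρ) (hγ1 : ρ / 2 < γ) (hγ2 : γ < ρ)
    (M : Set (Fin d → ℝ)) (hMfin : M.Finite) (hMne : M.Nonempty)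
    (hMgrid : M ⊆ grid ρ d) :
    IsCompact {x : Fin d → ℝ | infDist x M ≤ γ} ∧
    hausdorffDist (frontier {x : Fin d → ℝ | infDist x M ≤ γ})
      (discreteBoundary ρ M) ≤ γ := by
  have hγ₀ : 0 ≤ γ := by linarith
  refine ⟨setOf_infDist_le_eq_cthickening hMne hγ₀ ▸ hMfin.isCompact.cthickening,
    hausdorffDist_le_of_infDist hγ₀ (fun y hy => ?_) (fun a ha => ?_)⟩
  · have hyγ := frontier_le_subset_eq (continuous_infDist_pt M) continuous_const hy
    exact infDist_discreteBoundary_le hρ hγ1 hγ2 hMfin hMne hMgrid hyγ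
  · exact infDist_frontier_le_of_mem_discreteBoundary hρ hγ₀ hγ2 hMgrid ha
end

section
/- Let ρ > 0, Δ_ρ = ρℤ^d, let M ⊂ Δ_ρ be a finite nonempty chain-connected set of grid points, and let ρ/2 < γ* < ρ. Then M̂ := B_{γ*}(M)_∞ is strongly path-connected: for any z, z̃ ∈ M̂ there exists a continuous φ : [0,1] → ℝ^d with φ(0) = z, φ(1) = z̃, and φ(λ) ∈ int M̂ for all λ ∈ (0,1). -/
open Metric Set

/-- A "good path" from `x` to `y`: continuous on `[0,1]`, with interior of the
path lying in `U`. -/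
def GoodP {d : ℕ} (U : Set (Fin d → ℝ)) (x y : Fin d → ℝ) : Prop :=
  ∃ φ : ℝ → (Fin d → ℝ), ContinuousOn φ (Set.Icc 0 1) ∧
    φ 0 = x ∧ φ 1 = y ∧ ∀ t ∈ Set.Ioo (0:ℝ) 1, φ t ∈ U

lemma clamp_cont {d : ℕ} {φ : ℝ → (Fin d → ℝ)} (h : ContinuousOn φ (Set.Icc 0 1)) :
    Continuous (fun t : ℝ => φ (max (min t 1) 0)) := by
  apply h.comp_continuous
  · exact (continuous_id.min continuous_const).max continuous_const
  · intro t
    constructor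
    · exact le_max_right _ _
    · exact max_le (min_le_right _ _) zero_le_one

lemma clamp_eq {t : ℝ} (h0 : 0 ≤ t) (h1 : t ≤ 1) :
    max (min t 1) 0 = t := by
  rw [min_eq_left h1, max_eq_left h0]

lemma GoodP.const {d : ℕ} {U : Set (Fin d → ℝ)} {x : Fin d → ℝ} (hx : x ∈ U) :
    GoodP U x x :=
  ⟨fun _ => x, continuousOn_const, rfl, rfl, fun _ _ => hx⟩

lemma GoodP.symm {d : ℕ} {U : Set (Fin d → ℝ)} {x y : Fin d → ℝ} (h : GoodP U x y) :
    GoodP U y x := by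
  obtain ⟨φ, hc, h0, h1, hU⟩ := h
  refine ⟨fun t => φ (1 - t), ?_, by simpa, by simpa, ?_⟩
  · apply hc.comp (by fun_prop)
    intro t ht
    exact ⟨by linarith [ht.2], by linarith [ht.1]⟩
  · intro t ht
    exact hU (1 - t) ⟨by linarith [ht.2], by linarith [ht.1]⟩

lemma GoodP.trans {d : ℕ} {U : Set (Fin d → ℝ)} {x y z : Fin d → ℝ}
    (hxy : GoodP U x y) (hyz : GoodP U y z) (hy : y ∈ U) : GoodP U x z := by
  obtain ⟨φ₁, hc₁, h01, h11, hU₁⟩ := hxy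
  obtain ⟨φ₂, hc₂, h02, h12, hU₂⟩ := hyz
  set ψ₁ : ℝ → (Fin d → ℝ) := fun t => φ₁ (max (min t 1) 0) with hψ₁
  set ψ₂ : ℝ → (Fin d → ℝ) := fun t => φ₂ (max (min t 1) 0) with hψ₂
  have e₁ : ∀ t : ℝ, 0 ≤ t → t ≤ 1 → ψ₁ t = φ₁ t := fun t h0 h1 => by
    show φ₁ (max (min t 1) 0) = φ₁ t
    rw [clamp_eq h0 h1]
  have e₂ : ∀ t : ℝ, 0 ≤ t → t ≤ 1 → ψ₂ t = φ₂ t := fun t h0 h1 => by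
    show φ₂ (max (min t 1) 0) = φ₂ t
    rw [clamp_eq h0 h1]
  refine ⟨fun t => if t ≤ 1/2 then ψ₁ (2*t) else ψ₂ (2*t - 1), ?_, ?_, ?_, ?_⟩
  · apply Continuous.continuousOn
    apply Continuous.if_le
    · exact (clamp_cont hc₁).comp (by fun_prop)
    · exact (clamp_cont hc₂).comp (by fun_prop)
    · exact continuous_id
    · exact continuous_const
    · intro t ht
      subst ht
      have g2 : (2 : ℝ) * (1/2) - 1 = 0 := by norm_num
      have g1 : (2 : ℝ) * (1/2) = 1 := by norm_num
      rw [g2, g1, e₁ 1 zero_le_one le_rfl, e₂ 0 le_rfl zero_le_one, h11, h02]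
  · simp only [if_pos (by norm_num : (0:ℝ) ≤ 1/2)]
    rw [mul_zero, e₁ 0 le_rfl zero_le_one, h01]
  · simp only [if_neg (by norm_num : ¬ (1:ℝ) ≤ 1/2)]
    norm_num
    rw [e₂ 1 zero_le_one le_rfl, h12]
  · intro t ht
    by_cases h : t ≤ 1/2
    · simp only [if_pos h]
      rw [e₁ (2*t) (by linarith [ht.1]) (by linarith)]
      rcases lt_or_eq_of_le h with h' | h'
      · exact hU₁ (2*t) ⟨by linarith [ht.1], by linarith⟩
      · rw [h', (by norm_num : (2:ℝ) * (1/2) = 1), h11]; exact hy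
    · simp only [if_neg h]
      push_neg at h
      rw [e₂ (2*t - 1) (by linarith) (by linarith [ht.2])]
      exact hU₂ (2*t - 1) ⟨by linarith, by linarith [ht.2]⟩

/-- The straight segment from `x` to `y`, with distance estimates. -/
lemma seg_good {d : ℕ} {U : Set (Fin d → ℝ)} {x y : Fin d → ℝ}
    (h : ∀ t : ℝ, 0 < t → t < 1 → x + t • (y - x) ∈ U) : GoodP U x y := by
  refine ⟨fun t => x + t • (y - x), by fun_prop, by simp, by simp, fun t ht => h t ht.1 ht.2⟩

lemma seg_dist_left {d : ℕ} (x y : Fin d → ℝ) (t : ℝ) (ht : 0 ≤ t) :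
    dist (x + t • (y - x)) x = t * dist x y := by
  rw [dist_eq_norm, dist_eq_norm]
  have : x + t • (y - x) - x = t • (y - x) := by abel
  rw [this, norm_smul, Real.norm_eq_abs, abs_of_nonneg ht, ← norm_neg]
  congr 1
  abel

lemma seg_dist_right {d : ℕ} (x y : Fin d → ℝ) (t : ℝ) (ht : t ≤ 1) :
    dist (x + t • (y - x)) y = (1 - t) * dist x y := by
  rw [dist_eq_norm, dist_eq_norm]
  have : x + t • (y - x) - y = (1 - t) • (x - y) := by
    simp only [sub_smul, one_smul, smul_sub]
    abel
  rw [this, norm_smul, Real.norm_eq_abs, abs_of_nonneg (by linarith)]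

theorem stmt10 {d : ℕ} (ρ γ : ℝ) (hρ : 0 < ρ) (hγ1 : ρ / 2 < γ) (hγ2 : γ < ρ)
    (M : Set (Fin d → ℝ)) (hMfin : M.Finite) (hMne : M.Nonempty)
    (hMgrid : M ⊆ grid ρ d) (hMconn : ChainConnected ρ M)
    (z ztilde : Fin d → ℝ)
    (hz : z ∈ {x : Fin d → ℝ | infDist x M ≤ γ})
    (hztilde : ztilde ∈ {x : Fin d → ℝ | infDist x M ≤ γ}) :
    ∃ φ : ℝ → (Fin d → ℝ), ContinuousOn φ (Set.Icc 0 1) ∧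
      φ 0 = z ∧ φ 1 = ztilde ∧
      ∀ t ∈ Set.Ioo (0:ℝ) 1, φ t ∈ interior {x : Fin d → ℝ | infDist x M ≤ γ} := by
  have hγ0 : 0 < γ := lt_trans (by linarith) hγ1
  set S : Set (Fin d → ℝ) := {x : Fin d → ℝ | infDist x M ≤ γ} with hS
  set U : Set (Fin d → ℝ) := interior S with hUdef
  -- balls around points of M are in the interior
  have hball : ∀ m ∈ M, ball m γ ⊆ U := by
    intro m hm
    apply interior_maximal _ isOpen_ball
    intro x hx
    exact le_trans (infDist_le_dist_of_mem hm) (le_of_lt hx)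
  have hMU : ∀ m ∈ M, m ∈ U := fun m hm =>
    hball m hm (mem_ball_self hγ0)
  -- segment from a point within distance γ of m ∈ M, to m
  have hseg1 : ∀ (x m : Fin d → ℝ), m ∈ M → dist x m ≤ γ → GoodP U x m := by
    intro x m hm hd
    apply seg_good
    intro t ht0 ht1
    apply hball m hm
    rw [mem_ball, seg_dist_right x m t (le_of_lt ht1)]
    calc (1 - t) * dist x m ≤ (1 - t) * γ := by
          apply mul_le_mul_of_nonneg_left hd (by linarith)
      _ < γ := by nlinarith
  -- segment between two chain-neighbours
  have hseg2 : ∀ (m m' : Fin d → ℝ), m ∈ M → m' ∈ M → dist m' m = ρ → GoodP U m m' := by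
    intro m m' hm hm' hd
    apply seg_good
    intro t ht0 ht1
    by_cases h : t ≤ 1/2
    · apply hball m hm
      rw [mem_ball, seg_dist_left m m' t (le_of_lt ht0), dist_comm m m', hd]
      nlinarith
    · apply hball m' hm'
      rw [mem_ball, seg_dist_right m m' t (le_of_lt ht1), dist_comm m m', hd]
      push_neg at h
      nlinarith
  -- chains give good paths
  have hchain : ∀ (N : ℕ) (c : ℕ → Fin d → ℝ),
      (∀ n < N, dist (c (n + 1)) (c n) = ρ) → (∀ n ≤ N, c n ∈ M) →
      GoodP U (c 0) (c N) := by
    intro N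
    induction N with
    | zero => intro c _ hmem; exact GoodP.const (hMU _ (hmem 0 le_rfl))
    | succ N ih =>
      intro c hd hmem
      have h1 : GoodP U (c 0) (c N) :=
        ih c (fun n hn => hd n (Nat.lt_succ_of_lt hn))
          (fun n hn => hmem n (le_trans hn (Nat.le_succ N)))
      have h2 : GoodP U (c N) (c (N + 1)) :=
        hseg2 (c N) (c (N + 1)) (hmem N (Nat.le_succ N)) (hmem (N + 1) le_rfl)
          (hd N (Nat.lt_succ_self N))
      exact h1.trans h2 (hMU _ (hmem N (Nat.le_succ N)))
  -- nearest points
  obtain ⟨m, hm, hmz⟩ := (hMfin.isCompact).exists_infDist_eq_dist hMne z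
  obtain ⟨m', hm', hmz'⟩ := (hMfin.isCompact).exists_infDist_eq_dist hMne ztilde
  have hdz : dist z m ≤ γ := by rw [← hmz]; exact hz
  have hdz' : dist ztilde m' ≤ γ := by rw [← hmz']; exact hztilde
  obtain ⟨N, c, hc0, hcN, hcd, hcm⟩ := hMconn m hm m' hm'
  have P1 : GoodP U z m := hseg1 z m hm hdz
  have P2 : GoodP U m m' := by
    have := hchain N c hcd (fun n hn => hcm n hn)
    rwa [hc0, hcN] at this
  have P3 : GoodP U m' ztilde := (hseg1 ztilde m' hm' hdz').symm
  exact (P1.trans P2 (hMU m hm)).trans P3 (hMU m' hm')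
end

section
/- Let F : ℝ^d → (convex compact subsets of ℝ^d) be L-Lipschitz w.r.t. the sup-norm Hausdorff distance and h > 0 with Lh < 1; set Φ(x) := x + hF(x). Let M ⊂ ℝ^d be compact, and suppose y ∉ M, z ∈ M with dist∞(z, ∂M) > 0, and ξ ∈ Φ(y) ∩ Φ(z). Then there exists x ∈ ∂M with ξ ∈ Φ(x). (Continuous version of the intersection lemma, obtained by connecting two preimages of ξ by a path within Φ⁻¹(ξ).) -/
/-!
Write `ξ ∈ x + hF(x)` as `x ∈ T x` with `T x = ξ - hF(x)`: a set-valued map with nonempty convex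
compact values that is a contraction for the Hausdorff distance, with constant `θ = Lh < 1`.
Its displacement `x ↦ infDist x (T x)` is Lipschitz. Gluing near-nearest points of `T x` with a
partition of unity gives a continuous map `g` moving each point by about its displacement and
multiplying the displacement by about `θ`. Applying `g` repeatedly to the segment `[z, y]`, and
reattaching the images of the fixed points `z`, `y` by short segments, produces for every `ε > 0` a
connected set through `z` and `y` on which the displacement is at most `ε`. It meets `∂M`, and a
minimum of the displacement over the compact set `∂M` is a fixed point of `T`.
-/

open Metric Set Pointwise Topology

theorem IsPreconnected.inter_frontier_nonempty {X : Type*} [TopologicalSpace X] {s t : Set X}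
    (hs : IsPreconnected s) (hst : (s ∩ t).Nonempty) (hst' : (s \ t).Nonempty) :
    (s ∩ frontier t).Nonempty := by
  by_contra hfr
  have hsub : s ⊆ interior t ∪ (closure t)ᶜ := fun x hx => by
    by_cases hi : x ∈ interior t
    · exact Or.inl hi
    · exact Or.inr fun hc => hfr ⟨x, hx, hc, hi⟩
  obtain ⟨x, hxs, hxt⟩ := hst
  have hxi : x ∈ interior t := (hsub hxs).resolve_right (not_not.2 (subset_closure hxt))
  have hst_int : s ⊆ interior t :=
    hs.subset_left_of_subset_union isOpen_interior isClosed_closure.isOpen_compl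
      (disjoint_compl_right.mono_left interior_subset_closure) hsub ⟨x, hxs, hxi⟩
  obtain ⟨y, hys, hyt⟩ := hst'
  exact hyt (interior_subset (hst_int hys))

theorem IsCompact.exists_le_of_forall_exists_le_add {X : Type*} [TopologicalSpace X]
    {K : Set X} (hK : IsCompact K) {f : X → ℝ} (hf : ContinuousOn f K) {a : ℝ}
    (h : ∀ ε > 0, ∃ x ∈ K, f x ≤ a + ε) : ∃ x ∈ K, f x ≤ a := by
  obtain ⟨x₁, hx₁, -⟩ := h 1 one_pos
  obtain ⟨x₀, hx₀, hmin⟩ := hK.exists_isMinOn ⟨x₁, hx₁⟩ hf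
  refine ⟨x₀, hx₀, le_of_forall_pos_le_add fun ε hε => ?_⟩
  obtain ⟨x, hx, hfx⟩ := h ε hε
  exact (hmin hx).trans hfx

theorem hausdorffDist_smul₀_le {𝕜 E : Type*} [NormedField 𝕜] [NormedAddCommGroup E]
    [NormedSpace 𝕜 E] {c : 𝕜} (hc : c ≠ 0) {s t : Set E} (fin : hausdorffEDist s t ≠ ⊤) :
    hausdorffDist (c • s) (c • t) ≤ ‖c‖ * hausdorffDist s t := by
  refine hausdorffDist_le_of_infDist (mul_nonneg (norm_nonneg c) hausdorffDist_nonneg) ?_ ?_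
  · rintro _ ⟨x, hx, rfl⟩
    rw [infDist_smul₀ hc]
    gcongr
    exact infDist_le_hausdorffDist_of_mem hx fin
  · rintro _ ⟨x, hx, rfl⟩
    rw [infDist_smul₀ hc, hausdorffDist_comm]
    gcongr
    exact infDist_le_hausdorffDist_of_mem hx (by rwa [hausdorffEDist_comm])

section LipschitzSetValued

variable {X Y : Type*} [PseudoMetricSpace X] [PseudoMetricSpace Y] {T : X → Set Y} {θ : ℝ}

theorem infDist_apply_le_add_mul_dist (hne : ∀ x, (T x).Nonempty)
    (hbdd : ∀ x, Bornology.IsBounded (T x))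
    (hT : ∀ x x', hausdorffDist (T x) (T x') ≤ θ * dist x x') (p : Y) (x x' : X) :
    infDist p (T x') ≤ infDist p (T x) + θ * dist x x' :=
  (infDist_le_infDist_add_hausdorffDist
    (hausdorffEDist_ne_top_of_nonempty_of_bounded (hne x) (hne x') (hbdd x) (hbdd x'))).trans
    (add_le_add_right (hT x x') _)

theorem lipschitzWith_infDist_apply (hne : ∀ x, (T x).Nonempty)
    (hbdd : ∀ x, Bornology.IsBounded (T x))
    (hT : ∀ x x', hausdorffDist (T x) (T x') ≤ θ * dist x x') (p : Y) :
    LipschitzWith θ.toNNReal fun x => infDist p (T x) :=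
  LipschitzWith.of_le_add_mul' θ fun x x' => by
    simpa [dist_comm] using infDist_apply_le_add_mul_dist hne hbdd hT p x' x

end LipschitzSetValued

section FixedPointDistance

variable {X : Type*} [PseudoMetricSpace X] {T : X → Set X} {θ : ℝ}

theorem infDist_self_apply_le_add_mul_dist (hne : ∀ x, (T x).Nonempty)
    (hbdd : ∀ x, Bornology.IsBounded (T x))
    (hT : ∀ x x', hausdorffDist (T x) (T x') ≤ θ * dist x x') (x x' : X) :
    infDist x' (T x') ≤ infDist x (T x) + (1 + θ) * dist x x' := by
  calc infDist x' (T x') ≤ infDist x (T x') + dist x' x := infDist_le_infDist_add_dist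
    _ ≤ infDist x (T x) + θ * dist x x' + dist x x' := by
      rw [dist_comm x' x]
      gcongr
      exact infDist_apply_le_add_mul_dist hne hbdd hT x x x'
    _ = infDist x (T x) + (1 + θ) * dist x x' := by ring

theorem lipschitzWith_infDist_self_apply (hne : ∀ x, (T x).Nonempty)
    (hbdd : ∀ x, Bornology.IsBounded (T x))
    (hT : ∀ x x', hausdorffDist (T x) (T x') ≤ θ * dist x x') :
    LipschitzWith (1 + θ).toNNReal fun x => infDist x (T x) :=
  LipschitzWith.of_le_add_mul' (1 + θ) fun x x' => by
    simpa [dist_comm] using infDist_self_apply_le_add_mul_dist hne hbdd hT x' x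

end FixedPointDistance

section ConvexValued

variable {E : Type*} [NormedAddCommGroup E] [NormedSpace ℝ E] {T : E → Set E} {θ : ℝ}

theorem infDist_self_apply_le_of_mem_segment (hne : ∀ x, (T x).Nonempty)
    (hbdd : ∀ x, Bornology.IsBounded (T x))
    (hT : ∀ x x', hausdorffDist (T x) (T x') ≤ θ * dist x x') (hθ : 0 ≤ θ) {z w p : E}
    (hz : z ∈ T z) (hp : p ∈ segment ℝ z w) : infDist p (T p) ≤ (1 + θ) * dist z w := by
  have hzp : dist z p ≤ dist z w := by
    rw [dist_comm]
    exact (convex_closedBall z (dist z w)).segment_subset (mem_closedBall_self dist_nonneg)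
      (by rw [mem_closedBall, dist_comm]) hp
  calc infDist p (T p) ≤ infDist z (T z) + (1 + θ) * dist z p :=
        infDist_self_apply_le_add_mul_dist hne hbdd hT z p
    _ ≤ (1 + θ) * dist z w := by
      rw [infDist_zero_of_mem hz, zero_add]
      gcongr

theorem exists_continuous_infDist_apply_lt (hne : ∀ x, (T x).Nonempty)
    (hbdd : ∀ x, Bornology.IsBounded (T x)) (hcv : ∀ x, Convex ℝ (T x))
    (hT : ∀ x x', hausdorffDist (T x) (T x') ≤ θ * dist x x') {α : ℝ} (hα : 0 < α) :
    ∃ g : C(E, E), ∀ x, infDist (g x) (T x) < α ∧ dist x (g x) < infDist x (T x) + α := by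
  obtain ⟨g, hg⟩ := exists_continuous_forall_mem_convex_of_local_const
    (t := fun x => thickening α (T x) ∩ ball x (infDist x (T x) + α))
    (fun x => ((hcv x).thickening α).inter (convex_ball _ _)) fun x => by
      -- a near-nearest point of `T x` stays admissible on a neighbourhood of `x`
      obtain ⟨c, hc, hxc⟩ :=
        (infDist_lt_iff (hne x)).1 (lt_add_of_pos_right (infDist x (T x)) hα)
      have hcT : ∀ᶠ y in 𝓝 x, infDist c (T y) < α :=
        (lipschitzWith_infDist_apply hne hbdd hT c).continuous.continuousAt.eventually_lt
          continuousAt_const (by rwa [infDist_zero_of_mem hc])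
      have hyc : ∀ᶠ y in 𝓝 x, dist y c < infDist y (T y) + α :=
        (continuous_id.dist continuous_const).continuousAt.eventually_lt
          ((lipschitzWith_infDist_self_apply hne hbdd hT).continuous.add
            continuous_const).continuousAt hxc
      exact ⟨c, hcT.and hyc |>.mono fun y hy =>
        ⟨(mem_thickening_iff_infDist_lt (hne y)).2 hy.1, mem_ball'.2 hy.2⟩⟩
  exact ⟨g, fun x => ⟨(mem_thickening_iff_infDist_lt (hne x)).1 (hg x).1, mem_ball'.1 (hg x).2⟩⟩

theorem exists_continuous_infDist_self_apply_lt (hne : ∀ x, (T x).Nonempty)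
    (hbdd : ∀ x, Bornology.IsBounded (T x)) (hcv : ∀ x, Convex ℝ (T x))
    (hT : ∀ x x', hausdorffDist (T x) (T x') ≤ θ * dist x x') (hθ₀ : 0 ≤ θ) (hθ₁ : θ ≤ 1)
    {α : ℝ} (hα : 0 < α) :
    ∃ g : C(E, E), ∀ x, dist x (g x) < infDist x (T x) + α ∧
      infDist (g x) (T (g x)) < θ * infDist x (T x) + 2 * α := by
  obtain ⟨g, hg⟩ := exists_continuous_infDist_apply_lt hne hbdd hcv hT hα
  refine ⟨g, fun x => ⟨(hg x).2, ?_⟩⟩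
  calc infDist (g x) (T (g x)) ≤ infDist (g x) (T x) + θ * dist x (g x) :=
        infDist_apply_le_add_mul_dist hne hbdd hT (g x) x (g x)
    _ < α + θ * (infDist x (T x) + α) :=
        add_lt_add_of_lt_of_le (hg x).1 (mul_le_mul_of_nonneg_left (hg x).2.le hθ₀)
    _ ≤ θ * infDist x (T x) + 2 * α := by nlinarith

theorem mem_connectedComponentIn_setOf_infDist_le_mul_add (hne : ∀ x, (T x).Nonempty)
    (hbdd : ∀ x, Bornology.IsBounded (T x))
    (hT : ∀ x x', hausdorffDist (T x) (T x') ≤ θ * dist x x') (hθ₀ : 0 ≤ θ) (hθ₁ : θ ≤ 1)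
    {α b : ℝ} {g : E → E} (hg_cont : Continuous g)
    (hg : ∀ x, dist x (g x) < infDist x (T x) + α ∧
      infDist (g x) (T (g x)) < θ * infDist x (T x) + 2 * α)
    {y z : E} (hy : y ∈ T y) (hz : z ∈ T z)
    (hyz : y ∈ connectedComponentIn {x | infDist x (T x) ≤ b} z) :
    y ∈ connectedComponentIn {x | infDist x (T x) ≤ θ * b + 2 * α} z := by
  have hyb : y ∈ {x | infDist x (T x) ≤ b} := connectedComponentIn_subset _ _ hyz
  have hb : 0 ≤ b := infDist_nonneg.trans hyb
  have hzC : z ∈ connectedComponentIn {x | infDist x (T x) ≤ b} z :=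
    mem_connectedComponentIn (by simp [infDist_zero_of_mem hz, hb])
  have hseg : ∀ w ∈ T w, ∀ p ∈ segment ℝ w (g w), infDist p (T p) ≤ θ * b + 2 * α := by
    intro w hw p hp
    have hgw : dist w (g w) < α := by simpa [infDist_zero_of_mem hw] using (hg w).1
    calc infDist p (T p) ≤ (1 + θ) * dist w (g w) :=
          infDist_self_apply_le_of_mem_segment hne hbdd hT hθ₀ hw hp
      _ ≤ (1 + θ) * α := mul_le_mul_of_nonneg_left hgw.le (by linarith)
      _ ≤ θ * b + 2 * α := by nlinarith [mul_nonneg hθ₀ hb, dist_nonneg.trans_lt hgw]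
  have hC : IsPreconnected (segment ℝ z (g z) ∪
      (g '' connectedComponentIn {x | infDist x (T x) ≤ b} z ∪ segment ℝ (g y) y)) :=
    (convex_segment _ _).isPreconnected.union (g z) (right_mem_segment _ _ _)
      (Or.inl (mem_image_of_mem g hzC))
      ((isPreconnected_connectedComponentIn.image g hg_cont.continuousOn).union (g y)
        (mem_image_of_mem g hyz) (left_mem_segment _ _ _) (convex_segment _ _).isPreconnected)
  refine hC.subset_connectedComponentIn (Or.inl (left_mem_segment _ _ _)) ?_
    (Or.inr (Or.inr (right_mem_segment _ _ _)))
  rintro p (hp | ⟨x, hx, rfl⟩ | hp)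
  · exact hseg z hz p hp
  · have hxb : x ∈ {x | infDist x (T x) ≤ b} := connectedComponentIn_subset _ _ hx
    exact (hg x).2.le.trans (by gcongr; exact hxb)
  · exact hseg y hy p (segment_symm ℝ (g y) y ▸ hp)

theorem mem_connectedComponentIn_setOf_infDist_le (hne : ∀ x, (T x).Nonempty)
    (hbdd : ∀ x, Bornology.IsBounded (T x)) (hcv : ∀ x, Convex ℝ (T x))
    (hT : ∀ x x', hausdorffDist (T x) (T x') ≤ θ * dist x x') (hθ₀ : 0 ≤ θ) (hθ₁ : θ < 1)
    {y z : E} (hy : y ∈ T y) (hz : z ∈ T z) {ε : ℝ} (hε : 0 < ε) :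
    y ∈ connectedComponentIn {x | infDist x (T x) ≤ ε} z := by
  set B := (1 + θ) * dist z y with hB
  set c := ε / 2 with hc
  obtain ⟨g, hg⟩ := exists_continuous_infDist_self_apply_lt hne hbdd hcv hT hθ₀ hθ₁.le
    (α := (1 - θ) * c / 2) (by positivity)
  have hiter : ∀ n : ℕ, y ∈ connectedComponentIn {x | infDist x (T x) ≤ θ ^ n * B + c} z := by
    intro n
    induction n with
    | zero =>
      refine (convex_segment z y).isPreconnected.subset_connectedComponentIn
        (left_mem_segment _ _ _) (fun p hp => ?_) (right_mem_segment _ _ _)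
      have := infDist_self_apply_le_of_mem_segment hne hbdd hT hθ₀ hz hp
      simp only [mem_ofPred_eq, pow_zero, one_mul]
      linarith
    | succ n ih =>
      have hbound : θ * (θ ^ n * B + c) + 2 * ((1 - θ) * c / 2) = θ ^ (n + 1) * B + c := by ring
      simpa only [hbound] using mem_connectedComponentIn_setOf_infDist_le_mul_add hne hbdd hT
        hθ₀ hθ₁.le g.continuous hg hy hz ih
  obtain ⟨n, hn⟩ := (((tendsto_pow_atTop_nhds_zero_of_lt_one hθ₀ hθ₁).mul_const B).eventually
    (gt_mem_nhds (show 0 * B < c by simp [c, hε]))).exists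
  exact connectedComponentIn_mono z (fun x hx => by simp only [mem_ofPred_eq] at hx ⊢; linarith)
    (hiter n)

theorem exists_mem_frontier_mem_apply (hne : ∀ x, (T x).Nonempty)
    (hbdd : ∀ x, Bornology.IsBounded (T x)) (hcl : ∀ x, IsClosed (T x))
    (hcv : ∀ x, Convex ℝ (T x))
    (hT : ∀ x x', hausdorffDist (T x) (T x') ≤ θ * dist x x') (hθ₀ : 0 ≤ θ) (hθ₁ : θ < 1)
    {M : Set E} (hM : IsCompact (frontier M)) {y z : E} (hyM : y ∉ M) (hzM : z ∈ M)
    (hy : y ∈ T y) (hz : z ∈ T z) : ∃ x ∈ frontier M, x ∈ T x := by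
  obtain ⟨x, hxM, hx⟩ := hM.exists_le_of_forall_exists_le_add
    (lipschitzWith_infDist_self_apply hne hbdd hT).continuous.continuousOn (a := 0)
    fun ε hε => by
      have hyC := mem_connectedComponentIn_setOf_infDist_le hne hbdd hcv hT hθ₀ hθ₁ hy hz hε
      have hzC : z ∈ connectedComponentIn {x | infDist x (T x) ≤ ε} z :=
        mem_connectedComponentIn (by simp [infDist_zero_of_mem hz, hε.le])
      obtain ⟨x, hxC, hxM⟩ := isPreconnected_connectedComponentIn.inter_frontier_nonempty
        ⟨z, hzC, hzM⟩ ⟨y, hyC, hyM⟩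
      exact ⟨x, hxM, by simpa using connectedComponentIn_subset _ _ hxC⟩
  exact ⟨x, hxM, ((hcl x).mem_iff_infDist_zero (hne x)).2 (le_antisymm (by simpa using hx)
    infDist_nonneg)⟩

end ConvexValued

theorem stmt11_general {d : ℕ} (F : (Fin d → ℝ) → Set (Fin d → ℝ))
    (hne : ∀ x, (F x).Nonempty) (hcv : ∀ x, Convex ℝ (F x))
    (hcp : ∀ x, IsCompact (F x))
    (L h : ℝ) (hh : 0 < h) (hLh : L * h < 1)
    (hlip : ∀ x y, hausdorffDist (F x) (F y) ≤ L * dist x y)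
    (M : Set (Fin d → ℝ)) (hM : IsCompact M)
    (y z ξ : Fin d → ℝ) (hy : y ∉ M) (hz : z ∈ M)
    (hξy : ξ ∈ {y} + h • F y) (hξz : ξ ∈ {z} + h • F z) :
    ∃ x ∈ frontier M, ξ ∈ {x} + h • F x := by
  set T : (Fin d → ℝ) → Set (Fin d → ℝ) := fun x => {ξ} - h • F x
  have hmem : ∀ x, ξ ∈ {x} + h • F x ↔ x ∈ T x := fun x => by
    simp only [T, singleton_add, singleton_sub, mem_image, sub_eq_iff_eq_add, @eq_comm _ ξ]
  have hT_compact : ∀ x, IsCompact (T x) := fun x => by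
    simp only [T, singleton_sub]
    exact ((hcp x).smul h).image (continuous_sub_left ξ)
  have hT : ∀ x x', hausdorffDist (T x) (T x') ≤ max (L * h) 0 * dist x x' := fun x x' =>
    calc hausdorffDist (T x) (T x') = hausdorffDist (h • F x) (h • F x') := by
          simp only [T, singleton_sub]
          exact hausdorffDist_image (IsometryEquiv.subLeft ξ).isometry
      _ ≤ ‖h‖ * hausdorffDist (F x) (F x') := hausdorffDist_smul₀_le hh.ne'
          (hausdorffEDist_ne_top_of_nonempty_of_bounded (hne x) (hne x')
            (hcp x).isBounded (hcp x').isBounded)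
      _ ≤ max (L * h) 0 * dist x x' := by
          rw [Real.norm_of_nonneg hh.le]
          nlinarith [hlip x x', le_max_left (L * h) 0, dist_nonneg (x := x) (y := x')]
  obtain ⟨x, hxM, hx⟩ := exists_mem_frontier_mem_apply
    (fun x => (singleton_nonempty ξ).sub (hne x).smul_set) (fun x => (hT_compact x).isBounded)
    (fun x => (hT_compact x).isClosed) (fun x => (convex_singleton ξ).sub ((hcv x).smul h)) hT
    (le_max_right _ _) (max_lt hLh one_pos)
    (hM.of_isClosed_subset isClosed_frontier hM.isClosed.frontier_subset)
    hy hz ((hmem y).1 hξy) ((hmem z).1 hξz)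
  exact ⟨x, hxM, (hmem x).2 hx⟩

theorem stmt11 {d : ℕ} (F : (Fin d → ℝ) → Set (Fin d → ℝ))
    (hne : ∀ x, (F x).Nonempty) (hcv : ∀ x, Convex ℝ (F x))
    (hcp : ∀ x, IsCompact (F x))
    (L h : ℝ) (hh : 0 < h) (hLh : L * h < 1)
    (hlip : ∀ x y, hausdorffDist (F x) (F y) ≤ L * dist x y)
    (M : Set (Fin d → ℝ)) (hM : IsCompact M)
    (y z ξ : Fin d → ℝ) (hy : y ∉ M) (hz : z ∈ M)
    (hzint : 0 < infDist z (frontier M))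
    (hξy : ξ ∈ {y} + h • F y) (hξz : ξ ∈ {z} + h • F z) :
    ∃ x ∈ frontier M, ξ ∈ {x} + h • F x :=
  stmt11_general F hne hcv hcp L h hh hLh hlip M hM y z ξ hy hz hξy hξz
end

section
/- Let G : ℝ^d → (convex compact subsets of ℝ^d) be l-Lipschitz w.r.t. the sup-norm Hausdorff distance with l < 1, let x⁰ ∈ ℝ^d, ŷ ∈ ℝ^d, and define the iteration: x^{k+1} := x^k + r^k where r^k := ŷ − (x^k + g^k) and g^k is any element of the sup-norm projection Proj(ŷ − x^k, G(x^k))_∞. Then |r^{k+1}|∞ ≤ l |r^k|∞ for all k, and consequently the sequence (x^k) is Cauchy. -/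
open Metric Set

theorem stmt12 {d : ℕ} (G : (Fin d → ℝ) → Set (Fin d → ℝ))
    (hne : ∀ x, (G x).Nonempty) (hcv : ∀ x, Convex ℝ (G x))
    (hcp : ∀ x, IsCompact (G x))
    (l : ℝ) (hl : l < 1)
    (hlip : ∀ x y, hausdorffDist (G x) (G y) ≤ l * dist x y)
    (yhat : Fin d → ℝ) (x g : ℕ → Fin d → ℝ)
    (hg : ∀ k, g k ∈ G (x k))
    (hproj : ∀ k, dist (yhat - x k) (g k) = infDist (yhat - x k) (G (x k)))
    (hrec : ∀ k, x (k + 1) = x k + (yhat - (x k + g k))) :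
    (∀ k, ‖yhat - (x (k + 1) + g (k + 1))‖ ≤ l * ‖yhat - (x k + g k)‖) ∧
    CauchySeq x := by
  have key : ∀ k, ‖yhat - (x (k + 1) + g (k + 1))‖ ≤ l * ‖yhat - (x k + g k)‖ := by
    intro k
    have hx1 : x (k + 1) = yhat - g k := by rw [hrec k]; abel
    have hgk : yhat - x (k + 1) = g k := by rw [hx1]; abel
    have hnorm : ‖yhat - (x (k + 1) + g (k + 1))‖ = dist (yhat - x (k+1)) (g (k+1)) := by
      rw [dist_eq_norm]; ring_nf
    have hE : EMetric.hausdorffEdist (G (x k)) (G (x (k+1))) ≠ ⊤ :=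
      hausdorffEdist_ne_top_of_nonempty_of_bounded (hne _) (hne _)
        (hcp _).isBounded (hcp _).isBounded
    calc ‖yhat - (x (k + 1) + g (k + 1))‖
        = infDist (g k) (G (x (k+1))) := by rw [hnorm, hproj, hgk]
      _ ≤ hausdorffDist (G (x k)) (G (x (k+1))) :=
          infDist_le_hausdorffDist_of_mem (hg k) hE
      _ ≤ l * dist (x k) (x (k+1)) := hlip _ _
      _ = l * ‖yhat - (x k + g k)‖ := by
          rw [dist_eq_norm, hrec k, ← norm_neg (yhat - (x k + g k))]; congr 1; abel
  refine ⟨key, ?_⟩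
  set l' := max l 0 with hl'
  have hl'0 : 0 ≤ l' := le_max_right _ _
  have hl'1 : l' < 1 := max_lt hl one_pos
  have key' : ∀ k, ‖yhat - (x (k + 1) + g (k + 1))‖ ≤ l' * ‖yhat - (x k + g k)‖ := by
    intro k
    exact (key k).trans (mul_le_mul_of_nonneg_right (le_max_left _ _) (norm_nonneg _))
  have geo : ∀ k, ‖yhat - (x k + g k)‖ ≤ ‖yhat - (x 0 + g 0)‖ * l' ^ k := by
    intro k
    induction k with
    | zero => simp
    | succ n ih =>
        calc ‖yhat - (x (n+1) + g (n+1))‖ ≤ l' * ‖yhat - (x n + g n)‖ := key' n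
          _ ≤ l' * (‖yhat - (x 0 + g 0)‖ * l' ^ n) :=
              mul_le_mul_of_nonneg_left ih hl'0
          _ = ‖yhat - (x 0 + g 0)‖ * l' ^ (n+1) := by ring
  apply cauchySeq_of_le_geometric l' (‖yhat - (x 0 + g 0)‖) hl'1
  intro n
  have : dist (x n) (x (n+1)) = ‖yhat - (x n + g n)‖ := by
    rw [dist_eq_norm, hrec n, ← norm_neg (yhat - (x n + g n))]; congr 1; abel
  rw [this]; exact geo n
end
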